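/- arXiv:1605.01483 — 5 statements merged into one kernel-verified Lean document; each statement's English description precedes it below -/
import Mathlib

section
/- Let H = (V,E,w) be an edge-weighted hypergraph and let S_1, …, S_k be pairwise disjoint nonempty subsets of V. Then max_{i ∈ [k]} φ(S_i) ≥ ζ_k/2. -/
open Finset

/-- An edge-weighted hypergraph on a finite vertex set `V`: a finite set of hyperedges,
each a nonempty subset of `V`, with positive weights. -/
structure WHypergraph (V : Type*) [Fintype V] [DecidableEq V] where
  E : Finset (Finset V)
  w : Finset V → ℝ
  edge_nonempty : ∀ e ∈ E, e.Nonempty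
  w_pos : ∀ e ∈ E, 0 < w e

namespace WHypergraph

variable {V : Type*} [Fintype V] [DecidableEq V]

/-- The weight of a vertex: total weight of hyperedges containing it. -/
noncomputable def wv (H : WHypergraph V) (v : V) : ℝ :=
  ∑ e ∈ H.E.filter (fun e => v ∈ e), H.w e

/-- The weight of a set of vertices. -/
noncomputable def wS (H : WHypergraph V) (S : Finset V) : ℝ := ∑ v ∈ S, H.wv v

/-- The boundary of `S`: hyperedges meeting both `S` and its complement. -/
noncomputable def bdry (H : WHypergraph V) (S : Finset V) : Finset (Finset V) :=
  H.E.filter (fun e => (e ∩ S).Nonempty ∧ (e \ S).Nonempty)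

/-- The expansion `φ(S)` of a set of vertices. -/
noncomputable def phi (H : WHypergraph V) (S : Finset V) : ℝ :=
  (∑ e ∈ H.bdry S, H.w e) / H.wS S

/-- `max_{u,v ∈ e} (f u - f v)^2`. -/
noncomputable def edgeDisc (H : WHypergraph V) (f : V → ℝ) (e : Finset V) : ℝ :=
  sSup {x : ℝ | ∃ u ∈ e, ∃ v ∈ e, (f u - f v) ^ 2 = x}

/-- The discrepancy ratio `D_w(f)`. -/
noncomputable def disc (H : WHypergraph V) (f : V → ℝ) : ℝ :=
  (∑ e ∈ H.E, H.w e * H.edgeDisc f e) / ∑ u : V, H.wv u * f u ^ 2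

/-- The weighted inner product `⟨f,g⟩_w`. -/
noncomputable def wip (H : WHypergraph V) (f g : V → ℝ) : ℝ :=
  ∑ u : V, H.wv u * f u * g u

/-- `γ₂`: infimum of the discrepancy ratio over nonzero `f ⊥_w 1`. -/
noncomputable def gamma2 (H : WHypergraph V) : ℝ :=
  sInf {x : ℝ | ∃ f : V → ℝ, f ≠ 0 ∧ H.wip f (fun _ => 1) = 0 ∧ H.disc f = x}

/-- The hypergraph expansion `φ_H`. -/
noncomputable def phiH (H : WHypergraph V) : ℝ :=
  sInf {x : ℝ | ∃ S : Finset V, S.Nonempty ∧ S ≠ univ ∧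
    x = max (H.phi S) (H.phi Sᶜ)}

/-- `ζ_k`: inf over `k`-tuples of nonzero pairwise `w`-orthogonal vectors of the
sup of the discrepancy ratio over nonzero vectors in their span. -/
noncomputable def zeta (H : WHypergraph V) (k : ℕ) : ℝ :=
  sInf {x : ℝ | ∃ f : Fin k → V → ℝ, (∀ i, f i ≠ 0) ∧
    (∀ i j, i ≠ j → H.wip (f i) (f j) = 0) ∧
    x = sSup {y : ℝ | ∃ h : V → ℝ, h ≠ 0 ∧
      h ∈ Submodule.span ℝ (Set.range f) ∧ H.disc h = y}}

/-- `ξ_k`: inf over `k`-tuples of nonzero pairwise `w`-orthogonal vectors of the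
maximum discrepancy ratio among them. -/
noncomputable def xi (H : WHypergraph V) (k : ℕ) : ℝ :=
  sInf {x : ℝ | ∃ f : Fin k → V → ℝ, (∀ i, f i ≠ 0) ∧
    (∀ i j, i ≠ j → H.wip (f i) (f j) = 0) ∧
    x = sSup {y : ℝ | ∃ i, H.disc (f i) = y}}

/-- A sequence of procedural minimizers: `f 0` is a nonzero constant vector, each `f i`
is nonzero and `w`-orthogonal to the previous ones, and attains the infimum of the
discrepancy ratio over nonzero vectors `w`-orthogonal to the previous ones. -/
def IsProcMin (H : WHypergraph V) {k : ℕ} (f : Fin k → V → ℝ) : Prop :=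
  (∀ i, f i ≠ 0) ∧
  (∀ i : Fin k, (i : ℕ) = 0 → ∃ c : ℝ, f i = fun _ => c) ∧
  (∀ i j : Fin k, (j : ℕ) < (i : ℕ) → H.wip (f i) (f j) = 0) ∧
  (∀ i : Fin k, 0 < (i : ℕ) → H.disc (f i) =
    sInf {x : ℝ | ∃ g : V → ℝ, g ≠ 0 ∧
      (∀ j : Fin k, (j : ℕ) < (i : ℕ) → H.wip g (f j) = 0) ∧ H.disc g = x})

end WHypergraph

/-! The indicator vectors `𝟙_{S_i}` are nonzero and pairwise `w`-orthogonal, so they are an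
admissible tuple for `ζ_k`. For `h = ∑ c_i 𝟙_{S_i}` and a hyperedge `e`, only the indices with
`e ∈ ∂S_i` contribute to `h u - h v` for `u, v ∈ e`, and since a vertex lies in at most one `S_i`,
Cauchy–Schwarz gives `(h u - h v)² ≤ 2 ∑_{i : e ∈ ∂S_i} c_i²`. Summing over edges with
`M = max_i φ(S_i)`,
`∑_e w_e max_{u,v ∈ e} (h u - h v)² ≤ 2 ∑_i c_i² w(∂S_i) ≤ 2M ∑_i c_i² w(S_i) ≤ 2M ‖h‖_w²`. -/

open Function

section Indicator

variable {ι V : Type*} [Fintype ι] {S : ι → Finset V}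

theorem sum_indicator_one_apply_le_one (hS : Pairwise (Disjoint on S)) (x : V) :
    ∑ i, Set.indicator (S i) (1 : V → ℝ) x ≤ 1 := by
  classical
  simp only [Set.indicator_apply, Finset.mem_coe, Pi.one_apply, Finset.sum_boole]
  exact_mod_cast Finset.card_le_one.mpr fun i hi j hj => by
    by_contra hij
    exact Finset.disjoint_left.mp (hS hij) (Finset.mem_filter.mp hi).2 (Finset.mem_filter.mp hj).2

theorem sum_sq_indicator_one_sub_le_two (hS : Pairwise (Disjoint on S)) (x y : V) :
    ∑ i, (Set.indicator (S i) (1 : V → ℝ) x - Set.indicator (S i) (1 : V → ℝ) y) ^ 2 ≤ 2 := by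
  have hterm : ∀ i, (Set.indicator (S i) (1 : V → ℝ) x - Set.indicator (S i) (1 : V → ℝ) y) ^ 2 ≤
      Set.indicator (S i) (1 : V → ℝ) x + Set.indicator (S i) (1 : V → ℝ) y := by
    intro i
    classical
    simp only [Set.indicator_apply]
    split_ifs <;> norm_num
  calc _ ≤ ∑ i, (Set.indicator (S i) (1 : V → ℝ) x + Set.indicator (S i) (1 : V → ℝ) y) :=
        Finset.sum_le_sum fun i _ => hterm i
    _ = ∑ i, Set.indicator (S i) (1 : V → ℝ) x + ∑ i, Set.indicator (S i) (1 : V → ℝ) y :=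
        Finset.sum_add_distrib
    _ ≤ 2 := by
        linarith [sum_indicator_one_apply_le_one hS x, sum_indicator_one_apply_le_one hS y]

theorem sum_smul_indicator_one_apply_of_mem [DecidableEq ι] (hS : Pairwise (Disjoint on S))
    (c : ι → ℝ) {i : ι} {x : V} (hx : x ∈ S i) :
    (∑ j, c j • Set.indicator (S j) (1 : V → ℝ)) x = c i := by
  rw [Finset.sum_apply, Finset.sum_eq_single i]
  · simp [hx]
  · intro j _ hji
    simp [Finset.disjoint_left.mp (hS hji.symm) hx]
  · exact fun hi => absurd (Finset.mem_univ i) hi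

end Indicator

namespace WHypergraph

variable {V : Type*} [Fintype V] [DecidableEq V] (H : WHypergraph V)

theorem wv_nonneg (v : V) : 0 ≤ H.wv v :=
  Finset.sum_nonneg fun e he => (H.w_pos e (Finset.mem_filter.mp he).1).le

theorem w_le_wv {e : Finset V} (he : e ∈ H.E) {v : V} (hv : v ∈ e) : H.w e ≤ H.wv v :=
  Finset.single_le_sum (fun e he => (H.w_pos e (Finset.mem_filter.mp he).1).le)
    (Finset.mem_filter.mpr ⟨he, hv⟩)

theorem wS_nonneg (S : Finset V) : 0 ≤ H.wS S :=
  Finset.sum_nonneg fun v _ => H.wv_nonneg v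

theorem phi_nonneg (S : Finset V) : 0 ≤ H.phi S :=
  div_nonneg (Finset.sum_nonneg fun e he => (H.w_pos e (Finset.mem_filter.mp he).1).le)
    (H.wS_nonneg S)

/-- When `w(S) = 0`, `φ(S) = 0` is a junk value; the bound survives because then no hyperedge
meets `S`. -/
theorem sum_bdry_le_mul_wS_of_phi_le {S : Finset V} {M : ℝ} (hφ : H.phi S ≤ M) :
    ∑ e ∈ H.bdry S, H.w e ≤ M * H.wS S := by
  rcases (H.wS_nonneg S).eq_or_lt with hS | hS
  · have hempty : H.bdry S = ∅ := by
      refine Finset.eq_empty_of_forall_notMem fun e he => ?_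
      obtain ⟨he, ⟨v, hv⟩, -⟩ := Finset.mem_filter.mp he
      have hwv : 0 < H.wv v := (H.w_pos e he).trans_le (H.w_le_wv he (Finset.mem_inter.mp hv).1)
      have : H.wv v ≤ H.wS S :=
        Finset.single_le_sum (fun v _ => H.wv_nonneg v) (Finset.mem_inter.mp hv).2
      linarith
    simp [hempty, ← hS]
  · rwa [phi, div_le_iff₀ hS] at hφ

theorem edgeDisc_nonneg (f : V → ℝ) (e : Finset V) : 0 ≤ H.edgeDisc f e :=
  Real.sSup_nonneg fun _ ⟨_, _, _, _, hx⟩ => hx ▸ sq_nonneg _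

theorem disc_nonneg (f : V → ℝ) : 0 ≤ H.disc f :=
  div_nonneg
    (Finset.sum_nonneg fun e he => mul_nonneg (H.w_pos e he).le (H.edgeDisc_nonneg f e))
    (Finset.sum_nonneg fun u _ => mul_nonneg (H.wv_nonneg u) (sq_nonneg _))

theorem edgeDisc_le {f : V → ℝ} {e : Finset V} {b : ℝ} (hb : 0 ≤ b)
    (h : ∀ u ∈ e, ∀ v ∈ e, (f u - f v) ^ 2 ≤ b) : H.edgeDisc f e ≤ b :=
  Real.sSup_le (fun _ ⟨u, hu, v, hv, hx⟩ => hx ▸ h u hu v hv) hb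

theorem indicator_one_apply_eq_of_notMem_bdry {S e : Finset V} (he : e ∈ H.E)
    (hS : e ∉ H.bdry S) {u v : V} (hu : u ∈ e) (hv : v ∈ e) :
    Set.indicator S (1 : V → ℝ) u = Set.indicator S (1 : V → ℝ) v := by
  have hside : ∀ x ∈ e, ∀ y ∈ e, x ∈ S → y ∈ S := fun x hx y hy hxS => by
    by_contra hyS
    exact hS (Finset.mem_filter.mpr ⟨he, ⟨x, Finset.mem_inter.mpr ⟨hx, hxS⟩⟩,
      ⟨y, Finset.mem_sdiff.mpr ⟨hy, hyS⟩⟩⟩)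
  have : u ∈ S ↔ v ∈ S := ⟨hside u hu v hv, hside v hv u hu⟩
  simp [Set.indicator_apply, this]

variable {ι : Type*} [Fintype ι] {S : ι → Finset V}

theorem edgeDisc_sum_smul_indicator_le (hS : Pairwise (Disjoint on S)) (c : ι → ℝ)
    {e : Finset V} (he : e ∈ H.E) :
    H.edgeDisc (∑ i, c i • Set.indicator (S i) (1 : V → ℝ)) e ≤
      2 * ∑ i with e ∈ H.bdry (S i), c i ^ 2 := by
  refine H.edgeDisc_le (by positivity) fun u hu v hv => ?_
  set d : ι → ℝ := fun i => Set.indicator (S i) (1 : V → ℝ) u - Set.indicator (S i) 1 v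
  have hdiff : (∑ i, c i • Set.indicator (S i) (1 : V → ℝ)) u -
      (∑ i, c i • Set.indicator (S i) (1 : V → ℝ)) v =
        ∑ i with e ∈ H.bdry (S i), c i * d i := by
    rw [Finset.sum_filter_of_ne fun i _ hi => ?_]
    · simp only [Finset.sum_apply, Pi.smul_apply, smul_eq_mul, ← Finset.sum_sub_distrib, d,
        mul_sub]
    · by_contra hbdry
      exact hi (by simp [d, H.indicator_one_apply_eq_of_notMem_bdry he hbdry hu hv])
  have hd : ∑ i with e ∈ H.bdry (S i), d i ^ 2 ≤ 2 :=
    (Finset.sum_le_sum_of_subset_of_nonneg (Finset.filter_subset _ _)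
      fun i _ _ => sq_nonneg (d i)).trans (sum_sq_indicator_one_sub_le_two hS u v)
  rw [hdiff]
  calc _ ≤ (∑ i with e ∈ H.bdry (S i), c i ^ 2) * ∑ i with e ∈ H.bdry (S i), d i ^ 2 :=
        Finset.sum_mul_sq_le_sq_mul_sq _ _ _
    _ ≤ 2 * ∑ i with e ∈ H.bdry (S i), c i ^ 2 := by
        rw [mul_comm]
        exact mul_le_mul_of_nonneg_right hd (Finset.sum_nonneg fun i _ => sq_nonneg (c i))

theorem sum_w_mul_sum_mem_bdry (S : ι → Finset V) (g : ι → ℝ) :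
    ∑ e ∈ H.E, H.w e * ∑ i with e ∈ H.bdry (S i), g i =
      ∑ i, g i * ∑ e ∈ H.bdry (S i), H.w e := by
  simp only [Finset.mul_sum]
  rw [Finset.sum_comm' (t' := Finset.univ) (s' := fun i => H.bdry (S i))]
  · exact Finset.sum_congr rfl fun i _ => Finset.sum_congr rfl fun e _ => mul_comm _ _
  · intro e i
    simp only [Finset.mem_filter, Finset.mem_univ, true_and, and_true]
    exact ⟨fun h => h.2, fun h => ⟨Finset.mem_of_mem_filter e h, h⟩⟩

theorem sum_sq_mul_wS_le (hS : Pairwise (Disjoint on S)) (c : ι → ℝ) :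
    ∑ i, c i ^ 2 * H.wS (S i) ≤
      ∑ u, H.wv u * (∑ i, c i • Set.indicator (S i) (1 : V → ℝ)) u ^ 2 := by
  classical
  calc ∑ i, c i ^ 2 * H.wS (S i)
      = ∑ i, ∑ u ∈ S i, H.wv u * (∑ j, c j • Set.indicator (S j) (1 : V → ℝ)) u ^ 2 := by
        refine Finset.sum_congr rfl fun i _ => ?_
        rw [wS, Finset.mul_sum]
        refine Finset.sum_congr rfl fun u hu => ?_
        rw [sum_smul_indicator_one_apply_of_mem hS c hu, mul_comm]
    _ = ∑ u ∈ Finset.univ.biUnion S,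
          H.wv u * (∑ j, c j • Set.indicator (S j) (1 : V → ℝ)) u ^ 2 :=
        (Finset.sum_biUnion fun i _ j _ hij => hS hij).symm
    _ ≤ _ := Finset.sum_le_sum_of_subset_of_nonneg (Finset.subset_univ _)
        fun u _ _ => mul_nonneg (H.wv_nonneg u) (sq_nonneg _)

theorem disc_sum_smul_indicator_le (hS : Pairwise (Disjoint on S)) {M : ℝ} (hM0 : 0 ≤ M)
    (hM : ∀ i, H.phi (S i) ≤ M) (c : ι → ℝ) :
    H.disc (∑ i, c i • Set.indicator (S i) (1 : V → ℝ)) ≤ 2 * M := by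
  refine div_le_of_le_mul₀ (Finset.sum_nonneg fun u _ => mul_nonneg (H.wv_nonneg u)
    (sq_nonneg _)) (by positivity) ?_
  calc _ ≤ ∑ e ∈ H.E, H.w e * (2 * ∑ i with e ∈ H.bdry (S i), c i ^ 2) :=
        Finset.sum_le_sum fun e he => mul_le_mul_of_nonneg_left
          (H.edgeDisc_sum_smul_indicator_le hS c he) (H.w_pos e he).le
    _ = 2 * ∑ i, c i ^ 2 * ∑ e ∈ H.bdry (S i), H.w e := by
        simp only [mul_left_comm _ (2 : ℝ), ← Finset.mul_sum, H.sum_w_mul_sum_mem_bdry]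
    _ ≤ 2 * ∑ i, c i ^ 2 * (M * H.wS (S i)) := by
        gcongr with i
        exact H.sum_bdry_le_mul_wS_of_phi_le (hM i)
    _ = 2 * M * ∑ i, c i ^ 2 * H.wS (S i) := by
        simp only [Finset.mul_sum]
        exact Finset.sum_congr rfl fun i _ => by ring
    _ ≤ _ := mul_le_mul_of_nonneg_left (H.sum_sq_mul_wS_le hS c) (by positivity)

theorem wip_indicator_one_eq_zero {S T : Finset V} (h : Disjoint S T) :
    H.wip (Set.indicator S 1) (Set.indicator T 1) = 0 :=
  Finset.sum_eq_zero fun u _ => by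
    by_cases hu : u ∈ S
    · simp [hu, Finset.disjoint_left.mp h hu]
    · simp [Set.indicator_apply, hu]

theorem zeta_le_of_forall_disc_le {k : ℕ} (f : Fin k → V → ℝ) (hf : ∀ i, f i ≠ 0)
    (horth : ∀ i j, i ≠ j → H.wip (f i) (f j) = 0) {B : ℝ} (hB : 0 ≤ B)
    (hdisc : ∀ h ∈ Submodule.span ℝ (Set.range f), H.disc h ≤ B) : H.zeta k ≤ B := by
  refine csInf_le_of_le ⟨0, ?_⟩ ⟨f, hf, horth, rfl⟩ ?_
  · rintro _ ⟨g, -, -, rfl⟩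
    exact Real.sSup_nonneg fun _ ⟨h, _, _, hh⟩ => hh ▸ H.disc_nonneg h
  · exact Real.sSup_le (fun _ ⟨h, _, hmem, hh⟩ => hh ▸ hdisc h hmem) hB

end WHypergraph

theorem disjoint_sets_expansion_ge_zeta_general {V : Type*} [Fintype V] [DecidableEq V]
    (H : WHypergraph V) (k : ℕ) (hk : 0 < k)
    (S : Fin k → Finset V) (hne : ∀ i, (S i).Nonempty)
    (hdisj : ∀ i j, i ≠ j → Disjoint (S i) (S j)) :
    H.zeta k / 2 ≤
      Finset.univ.sup' (Finset.univ_nonempty_iff.mpr ⟨⟨0, hk⟩⟩)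
        (fun i => H.phi (S i)) := by
  set M := Finset.univ.sup' (Finset.univ_nonempty_iff.mpr ⟨⟨0, hk⟩⟩) (fun i => H.phi (S i))
  have hM : ∀ i, H.phi (S i) ≤ M := fun i => Finset.le_sup' (fun i => H.phi (S i)) (mem_univ i)
  have hM0 : 0 ≤ M := (H.phi_nonneg _).trans (hM ⟨0, hk⟩)
  have hind : ∀ i, Set.indicator (S i) (1 : V → ℝ) ≠ 0 := fun i hzero => by
    obtain ⟨v, hv⟩ := hne i
    simpa [hv] using congrFun hzero v
  have hzeta : H.zeta k ≤ 2 * M :=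
    H.zeta_le_of_forall_disc_le _ hind
      (fun i j hij => H.wip_indicator_one_eq_zero (hdisj i j hij)) (by positivity)
      fun h hh => by
        obtain ⟨c, rfl⟩ := (Submodule.mem_span_range_iff_exists_fun ℝ).mp hh
        exact H.disc_sum_smul_indicator_le (fun i j hij => hdisj i j hij) hM0 hM c
  linarith

/-- For pairwise disjoint nonempty sets `S_1, …, S_k`, `max_i φ(S_i) ≥ ζ_k / 2`. -/
theorem disjoint_sets_expansion_ge_zeta {V : Type*} [Fintype V] [DecidableEq V]
    (H : WHypergraph V) (hw : ∀ v : V, 0 < H.wv v) (k : ℕ) (hk : 0 < k)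
    (S : Fin k → Finset V) (hne : ∀ i, (S i).Nonempty)
    (hdisj : ∀ i j, i ≠ j → Disjoint (S i) (S j)) :
    H.zeta k / 2 ≤
      Finset.univ.sup' (Finset.univ_nonempty_iff.mpr ⟨⟨0, hk⟩⟩)
        (fun i => H.phi (S i)) :=
  disjoint_sets_expansion_ge_zeta_general H k hk S hne hdisj
end

section
/- There is a universal constant C > 0 such that for every edge-weighted hypergraph H = (V,E,w) with |V| ≥ 2 and γ₂ > 0, the hop-diameter satisfies diam(H) ≤ C · (ln N_w)/γ₂, where N_w := max_{u ∈ V} w(V)/w_u. -/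
open Finset

/-- An edge-weighted hypergraph on a finite vertex set `V`: a finite set of hyperedges,
each a nonempty subset of `V`, with positive weights. -/
structure EdgeWeightedHypergraph (V : Type*) [Fintype V] [DecidableEq V] where
  E : Finset (Finset V)
  w : Finset V → ℝ
  edge_nonempty : ∀ e ∈ E, e.Nonempty
  w_pos : ∀ e ∈ E, 0 < w e

namespace EdgeWeightedHypergraph

variable {V : Type*} [Fintype V] [DecidableEq V]

/-- The weight of a vertex: total weight of hyperedges containing it. -/
noncomputable def wv (H : EdgeWeightedHypergraph V) (v : V) : ℝ :=
  ∑ e ∈ H.E.filter (fun e => v ∈ e), H.w e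

/-- The weight of a set of vertices. -/
noncomputable def wS (H : EdgeWeightedHypergraph V) (S : Finset V) : ℝ := ∑ v ∈ S, H.wv v

/-- The boundary of `S`: hyperedges meeting both `S` and its complement. -/
noncomputable def bdry (H : EdgeWeightedHypergraph V) (S : Finset V) : Finset (Finset V) :=
  H.E.filter (fun e => (e ∩ S).Nonempty ∧ (e \ S).Nonempty)

/-- The expansion `φ(S)` of a set of vertices. -/
noncomputable def phi (H : EdgeWeightedHypergraph V) (S : Finset V) : ℝ :=
  (∑ e ∈ H.bdry S, H.w e) / H.wS S

/-- `max_{u,v ∈ e} (f u - f v)^2`. -/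
noncomputable def edgeDisc (H : EdgeWeightedHypergraph V) (f : V → ℝ) (e : Finset V) : ℝ :=
  sSup {x : ℝ | ∃ u ∈ e, ∃ v ∈ e, (f u - f v) ^ 2 = x}

/-- The discrepancy ratio `D_w(f)`. -/
noncomputable def disc (H : EdgeWeightedHypergraph V) (f : V → ℝ) : ℝ :=
  (∑ e ∈ H.E, H.w e * H.edgeDisc f e) / ∑ u : V, H.wv u * f u ^ 2

/-- The weighted inner product `⟨f,g⟩_w`. -/
noncomputable def wip (H : EdgeWeightedHypergraph V) (f g : V → ℝ) : ℝ :=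
  ∑ u : V, H.wv u * f u * g u

/-- `γ₂`: infimum of the discrepancy ratio over nonzero `f ⊥_w 1`. -/
noncomputable def gamma2 (H : EdgeWeightedHypergraph V) : ℝ :=
  sInf {x : ℝ | ∃ f : V → ℝ, f ≠ 0 ∧ H.wip f (fun _ => 1) = 0 ∧ H.disc f = x}

/-- The hypergraph expansion `φ_H`. -/
noncomputable def phiH (H : EdgeWeightedHypergraph V) : ℝ :=
  sInf {x : ℝ | ∃ S : Finset V, S.Nonempty ∧ S ≠ univ ∧
    x = max (H.phi S) (H.phi Sᶜ)}

/-- `ζ_k`: inf over `k`-tuples of nonzero pairwise `w`-orthogonal vectors of the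
sup of the discrepancy ratio over nonzero vectors in their span. -/
noncomputable def zeta (H : EdgeWeightedHypergraph V) (k : ℕ) : ℝ :=
  sInf {x : ℝ | ∃ f : Fin k → V → ℝ, (∀ i, f i ≠ 0) ∧
    (∀ i j, i ≠ j → H.wip (f i) (f j) = 0) ∧
    x = sSup {y : ℝ | ∃ h : V → ℝ, h ≠ 0 ∧
      h ∈ Submodule.span ℝ (Set.range f) ∧ H.disc h = y}}

/-- `ξ_k`: inf over `k`-tuples of nonzero pairwise `w`-orthogonal vectors of the
maximum discrepancy ratio among them. -/
noncomputable def xi (H : EdgeWeightedHypergraph V) (k : ℕ) : ℝ :=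
  sInf {x : ℝ | ∃ f : Fin k → V → ℝ, (∀ i, f i ≠ 0) ∧
    (∀ i j, i ≠ j → H.wip (f i) (f j) = 0) ∧
    x = sSup {y : ℝ | ∃ i, H.disc (f i) = y}}

/-- A sequence of procedural minimizers: `f 0` is a nonzero constant vector, each `f i`
is nonzero and `w`-orthogonal to the previous ones, and attains the infimum of the
discrepancy ratio over nonzero vectors `w`-orthogonal to the previous ones. -/
def IsProcMin (H : EdgeWeightedHypergraph V) {k : ℕ} (f : Fin k → V → ℝ) : Prop :=
  (∀ i, f i ≠ 0) ∧
  (∀ i : Fin k, (i : ℕ) = 0 → ∃ c : ℝ, f i = fun _ => c) ∧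
  (∀ i j : Fin k, (j : ℕ) < (i : ℕ) → H.wip (f i) (f j) = 0) ∧
  (∀ i : Fin k, 0 < (i : ℕ) → H.disc (f i) =
    sInf {x : ℝ | ∃ g : V → ℝ, g ≠ 0 ∧
      (∀ j : Fin k, (j : ℕ) < (i : ℕ) → H.wip g (f j) = 0) ∧ H.disc g = x})

end EdgeWeightedHypergraph

namespace EdgeWeightedHypergraph

variable {V : Type*} [Fintype V] [DecidableEq V]

/-- `connectsIn H u v l`: there is a path of `l` hyperedges of `H`, consecutive ones
intersecting, whose first edge contains `u` and last edge contains `v`. -/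
def connectsIn (H : EdgeWeightedHypergraph V) (u v : V) (l : ℕ) : Prop :=
  ∃ p : List (Finset V), p.length = l ∧ (∀ e ∈ p, e ∈ H.E) ∧
    p.Chain' (fun a b => (a ∩ b).Nonempty) ∧
    ∃ hp : p ≠ [], u ∈ p.head hp ∧ v ∈ p.getLast hp

/-- The hop-diameter: the least `l` such that every pair of vertices is connected
by a path of length at most `l`. -/
noncomputable def hopDiam (H : EdgeWeightedHypergraph V) : ℕ :=
  sInf {l : ℕ | ∀ u v : V, ∃ l' ≤ l, H.connectsIn u v l'}

end EdgeWeightedHypergraph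

/-!
Testing `γ₂` on the centered indicator of a set `S` with `w(S) ≤ w(V)/2` gives the easy Cheeger
bound `γ₂ w(S) ≤ 2 w(∂S)`. Every boundary edge of a hop-ball `B_t(u)` lies in `B_{t+1}(u)`, so
while a ball carries at most half of the total weight it grows by a factor `1 + γ₂/2` per step.
Since `w(B_1(u)) ≥ w_u ≥ w(V)/N_w`, after `m ≈ log N_w / log(1 + γ₂/2) = O(log N_w / γ₂)` steps
every ball carries more than half of the weight, so any two balls of radius `m + 1` meet and
`diam H ≤ 2(m + 1)`.
-/

namespace EdgeWeightedHypergraph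

variable {V : Type*} [Fintype V] [DecidableEq V] (H : EdgeWeightedHypergraph V)

lemma wv_nonneg (v : V) : 0 ≤ H.wv v :=
  sum_nonneg fun e he => (H.w_pos e (mem_filter.mp he).1).le

lemma wS_mono {S T : Finset V} (h : S ⊆ T) : H.wS S ≤ H.wS T :=
  sum_le_sum_of_subset_of_nonneg h fun v _ _ => H.wv_nonneg v

lemma wS_pos (hwv : ∀ v, 0 < H.wv v) {S : Finset V} (hS : S.Nonempty) : 0 < H.wS S :=
  sum_pos (fun v _ => hwv v) hS

lemma wS_add_wS_compl (S : Finset V) : H.wS S + H.wS Sᶜ = H.wS univ :=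
  sum_add_sum_compl S H.wv

lemma wS_lt_wS_univ (hwv : ∀ v, 0 < H.wv v) {S : Finset V} (hS : S ≠ univ) :
    H.wS S < H.wS univ := by
  have hSc : Sᶜ.Nonempty := nonempty_iff_ne_empty.mpr (by rwa [Ne, compl_eq_empty_iff])
  linarith [H.wS_add_wS_compl S, H.wS_pos hwv hSc]

lemma sum_ite_mem_wv (S : Finset V) : ∑ u, (if u ∈ S then H.wv u else 0) = H.wS S := by
  rw [sum_ite_mem, univ_inter, wS]

lemma exists_edge_mem {v : V} (hv : 0 < H.wv v) : ∃ e ∈ H.E, v ∈ e := by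
  obtain ⟨e, he, -⟩ := exists_ne_zero_of_sum_ne_zero hv.ne'
  exact ⟨e, (mem_filter.mp he).1, (mem_filter.mp he).2⟩

lemma exists_two_mul_wv_le (hcard : 2 ≤ Fintype.card V) :
    ∃ u, 2 * H.wv u ≤ H.wS univ := by
  have : Nonempty V := Fintype.card_pos_iff.mp (by omega)
  obtain ⟨u, -, hu⟩ := exists_min_image univ H.wv univ_nonempty
  obtain ⟨v, hvu⟩ := Fintype.exists_ne_of_one_lt_card (by omega) u
  refine ⟨u, ?_⟩
  have hpair := H.wS_mono (subset_univ {u, v})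
  rw [wS, sum_pair hvu.symm] at hpair
  linarith [hu v (mem_univ v)]

/-- Double counting: each edge of `F` contributes its weight to some vertex of `T`. -/
lemma sum_w_le_wS {F : Finset (Finset V)} (hF : F ⊆ H.E) {T : Finset V}
    (hT : ∀ e ∈ F, (e ∩ T).Nonempty) : ∑ e ∈ F, H.w e ≤ H.wS T := by
  have hw : ∀ e ∈ F, 0 ≤ H.w e := fun e he => (H.w_pos e (hF he)).le
  calc ∑ e ∈ F, H.w e ≤ ∑ e ∈ F, ∑ v ∈ T, (if v ∈ e then H.w e else 0) := by
        refine sum_le_sum fun e he => ?_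
        obtain ⟨v, hv⟩ := hT e he
        rw [mem_inter] at hv
        calc H.w e = if v ∈ e then H.w e else 0 := (if_pos hv.1).symm
          _ ≤ _ := single_le_sum (f := fun v => if v ∈ e then H.w e else 0)
                (fun _ _ => by split_ifs <;> simp [hw e he]) hv.2
    _ = ∑ v ∈ T, ∑ e ∈ F.filter (v ∈ ·), H.w e := by
        rw [sum_comm]; simp only [sum_filter]
    _ ≤ H.wS T := sum_le_sum fun v _ =>
        sum_le_sum_of_subset_of_nonneg (filter_subset_filter _ hF)
          fun e he _ => (H.w_pos e (mem_filter.mp he).1).le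

lemma edgeDisc_eq {f : V → ℝ} {e : Finset V} {c : ℝ}
    (hle : ∀ u ∈ e, ∀ v ∈ e, (f u - f v) ^ 2 ≤ c) {u v : V} (hu : u ∈ e) (hv : v ∈ e)
    (huv : (f u - f v) ^ 2 = c) : H.edgeDisc f e = c :=
  IsGreatest.csSup_eq ⟨⟨u, hu, v, hv, huv⟩, by rintro _ ⟨a, ha, b, hb, rfl⟩; exact hle a ha b hb⟩

lemma edgeDisc_nonneg (f : V → ℝ) {e : Finset V} (he : e.Nonempty) : 0 ≤ H.edgeDisc f e := by
  obtain ⟨u, hu⟩ := he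
  exact le_csSup (e.finite_toSet.image2 _ e.finite_toSet).bddAbove ⟨u, hu, u, hu, by ring⟩

lemma disc_nonneg (f : V → ℝ) : 0 ≤ H.disc f :=
  div_nonneg
    (sum_nonneg fun e he => mul_nonneg (H.w_pos e he).le (H.edgeDisc_nonneg f (H.edge_nonempty e he)))
    (sum_nonneg fun u _ => mul_nonneg (H.wv_nonneg u) (sq_nonneg _))

lemma gamma2_le_disc {f : V → ℝ} (hf : f ≠ 0) (horth : H.wip f (fun _ => 1) = 0) :
    H.gamma2 ≤ H.disc f :=
  csInf_le ⟨0, by rintro _ ⟨g, -, -, rfl⟩; exact H.disc_nonneg g⟩ ⟨f, hf, horth, rfl⟩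

/-- The indicator of `S`, shifted to be `w`-orthogonal to the constants. -/
noncomputable def centeredIndicator (S : Finset V) : V → ℝ :=
  fun v => (if v ∈ S then 1 else 0) - H.wS S / H.wS univ

lemma wip_centeredIndicator_one (hwv : ∀ v, 0 < H.wv v) {S : Finset V} (hS : S.Nonempty) :
    H.wip (H.centeredIndicator S) (fun _ => 1) = 0 := by
  have hW : H.wS univ ≠ 0 := (H.wS_pos hwv (hS.mono (subset_univ S))).ne'
  have hterm : ∀ u, H.wv u * H.centeredIndicator S u * 1 =
      (if u ∈ S then H.wv u else 0) - H.wv u * (H.wS S / H.wS univ) := by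
    intro u; unfold centeredIndicator; split_ifs <;> ring
  simp only [wip, hterm, sum_sub_distrib, sum_ite_mem_wv, ← sum_mul]
  rw [← wS]; field_simp; ring

lemma sum_wv_mul_centeredIndicator_sq (hwv : ∀ v, 0 < H.wv v) {S : Finset V}
    (hS : S.Nonempty) :
    ∑ u, H.wv u * H.centeredIndicator S u ^ 2 = H.wS S * (1 - H.wS S / H.wS univ) := by
  have hW : H.wS univ ≠ 0 := (H.wS_pos hwv (hS.mono (subset_univ S))).ne'
  set α := H.wS S / H.wS univ with hα
  have hterm : ∀ u, H.wv u * H.centeredIndicator S u ^ 2 =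
      (if u ∈ S then H.wv u else 0) * (1 - 2 * α) + H.wv u * α ^ 2 := by
    intro u; unfold centeredIndicator; split_ifs <;> ring
  simp only [hterm, sum_add_distrib, ← sum_mul, sum_ite_mem_wv]
  rw [← wS, hα]; field_simp; ring

lemma edgeDisc_centeredIndicator {S e : Finset V} (he : e ∈ H.E) :
    H.edgeDisc (H.centeredIndicator S) e = if e ∈ H.bdry S then 1 else 0 := by
  have hsub : ∀ u v, H.centeredIndicator S u - H.centeredIndicator S v =
      (if u ∈ S then 1 else 0) - (if v ∈ S then 1 else 0) := fun u v => by
    simp only [centeredIndicator]; ring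
  simp only [bdry, mem_filter, he, true_and]
  split_ifs with hbd
  · obtain ⟨⟨x, hx⟩, ⟨y, hy⟩⟩ := hbd
    rw [mem_inter] at hx
    rw [mem_sdiff] at hy
    refine H.edgeDisc_eq (fun u _ v _ => ?_) hx.1 hy.1 (by simp [hsub, hx.2, hy.2])
    rw [hsub]; split_ifs <;> norm_num
  · obtain ⟨u, hu⟩ := H.edge_nonempty e he
    refine H.edgeDisc_eq (fun a ha b hb => ?_) hu hu (by ring)
    rw [hsub]
    by_cases haS : a ∈ S <;> by_cases hbS : b ∈ S
    · simp [haS, hbS]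
    · exact absurd ⟨⟨a, mem_inter.mpr ⟨ha, haS⟩⟩, ⟨b, mem_sdiff.mpr ⟨hb, hbS⟩⟩⟩ hbd
    · exact absurd ⟨⟨b, mem_inter.mpr ⟨hb, hbS⟩⟩, ⟨a, mem_sdiff.mpr ⟨ha, haS⟩⟩⟩ hbd
    · simp [haS, hbS]

lemma sum_w_mul_edgeDisc_centeredIndicator (S : Finset V) :
    ∑ e ∈ H.E, H.w e * H.edgeDisc (H.centeredIndicator S) e = ∑ e ∈ H.bdry S, H.w e := by
  rw [bdry, sum_filter]
  refine sum_congr rfl fun e he => ?_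
  rw [H.edgeDisc_centeredIndicator he]
  simp only [bdry, mem_filter, he, true_and]
  split_ifs <;> ring

/-- Easy direction of Cheeger's inequality, tested on the centered indicator of `S`. -/
lemma gamma2_mul_le_sum_bdry (hwv : ∀ v, 0 < H.wv v) {S : Finset V} (hS : S.Nonempty)
    (hSu : S ≠ univ) :
    H.gamma2 * (H.wS S * (1 - H.wS S / H.wS univ)) ≤ ∑ e ∈ H.bdry S, H.w e := by
  have hW : 0 < H.wS univ := H.wS_pos hwv (hS.mono (subset_univ S))
  have hden : 0 < H.wS S * (1 - H.wS S / H.wS univ) :=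
    mul_pos (H.wS_pos hwv hS)
      (sub_pos.mpr ((div_lt_one hW).mpr (H.wS_lt_wS_univ hwv hSu)))
  have hdenf := H.sum_wv_mul_centeredIndicator_sq hwv hS
  have hne : H.centeredIndicator S ≠ 0 := fun h => hden.ne' (by rw [← hdenf, h]; simp)
  have hγ := H.gamma2_le_disc hne (H.wip_centeredIndicator_one hwv hS)
  rwa [disc, hdenf, sum_w_mul_edgeDisc_centeredIndicator, le_div_iff₀ hden] at hγ

lemma gamma2_mul_wS_le (hwv : ∀ v, 0 < H.wv v) (hγ : 0 ≤ H.gamma2) {S : Finset V}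
    (hS : S.Nonempty) (hhalf : 2 * H.wS S ≤ H.wS univ) :
    H.gamma2 * H.wS S ≤ 2 * ∑ e ∈ H.bdry S, H.w e := by
  have hSpos := H.wS_pos hwv hS
  have hW : 0 < H.wS univ := by linarith
  have hSu : S ≠ univ := by rintro rfl; linarith
  have hhalf' : H.wS S / 2 ≤ H.wS S * (1 - H.wS S / H.wS univ) := by
    have : H.wS S / H.wS univ ≤ 1 / 2 := by rw [div_le_iff₀ hW]; linarith
    nlinarith
  nlinarith [H.gamma2_mul_le_sum_bdry hwv hS hSu, mul_le_mul_of_nonneg_left hhalf' hγ]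

lemma gamma2_le_two (hcard : 2 ≤ Fintype.card V) (hwv : ∀ v, 0 < H.wv v)
    (hγ : 0 ≤ H.gamma2) : H.gamma2 ≤ 2 := by
  obtain ⟨u, hu⟩ := H.exists_two_mul_wv_le hcard
  have hS : H.wS {u} = H.wv u := sum_singleton _ _
  have hcheeger := H.gamma2_mul_wS_le hwv hγ (singleton_nonempty u) (by rwa [hS])
  have hbdry : ∑ e ∈ H.bdry {u}, H.w e ≤ H.wS {u} :=
    H.sum_w_le_wS (filter_subset _ _) fun e he => (mem_filter.mp he).2.1
  rw [hS] at hcheeger hbdry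
  nlinarith [hwv u]

lemma connectsIn_single {u v : V} {e : Finset V} (he : e ∈ H.E) (hu : u ∈ e) (hv : v ∈ e) :
    H.connectsIn u v 1 :=
  ⟨[e], rfl, by simpa using he, List.isChain_singleton e, by simp, hu, hv⟩

lemma connectsIn_symm {u v : V} {l : ℕ} (h : H.connectsIn u v l) : H.connectsIn v u l := by
  obtain ⟨p, hlen, hE, hchain, hp, hu, hv⟩ := h
  refine ⟨p.reverse, by simpa using hlen, fun e he => hE e (List.mem_reverse.mp he), ?_,
    by simpa using hp, by rwa [List.head_reverse], by rwa [List.getLast_reverse]⟩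
  rw [List.Chain', List.isChain_reverse]
  exact hchain.imp fun a b hab => by rwa [inter_comm] at hab

lemma connectsIn_trans {u x v : V} {l₁ l₂ : ℕ} (h₁ : H.connectsIn u x l₁)
    (h₂ : H.connectsIn x v l₂) : H.connectsIn u v (l₁ + l₂) := by
  obtain ⟨p, hlenp, hEp, hchainp, hp, hup, hxp⟩ := h₁
  obtain ⟨q, hlenq, hEq, hchainq, hq, hxq, hvq⟩ := h₂
  refine ⟨p ++ q, by simp [hlenp, hlenq], fun e he => (List.mem_append.mp he).elim (hEp e) (hEq e),
    ?_, by simp [hp], by rwa [List.head_append_of_ne_nil hp],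
    by rwa [List.getLast_append_of_ne_nil _ hq]⟩
  rw [List.Chain', List.isChain_append]
  refine ⟨hchainp, hchainq, fun a ha b hb => ?_⟩
  rw [List.getLast?_eq_getLast_of_ne_nil hp, Option.mem_def, Option.some.injEq] at ha
  rw [List.head?_eq_some_head hq, Option.mem_def, Option.some.injEq] at hb
  subst ha hb
  exact ⟨x, mem_inter.mpr ⟨hxp, hxq⟩⟩

open Classical in
/-- The hop-ball of radius `t` around `u`. -/
noncomputable def ball (u : V) (t : ℕ) : Finset V :=
  univ.filter fun v => ∃ l ≤ t, H.connectsIn u v l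

lemma mem_ball {u v : V} {t : ℕ} : v ∈ H.ball u t ↔ ∃ l ≤ t, H.connectsIn u v l := by
  classical
  simp [ball]

lemma ball_mono {u : V} {s t : ℕ} (h : s ≤ t) : H.ball u s ⊆ H.ball u t := fun _ hv =>
  let ⟨l, hl, hc⟩ := H.mem_ball.mp hv
  H.mem_ball.mpr ⟨l, hl.trans h, hc⟩

lemma self_mem_ball {u : V} (hu : 0 < H.wv u) {t : ℕ} (ht : 1 ≤ t) : u ∈ H.ball u t := by
  obtain ⟨e, he, hue⟩ := H.exists_edge_mem hu
  exact H.mem_ball.mpr ⟨1, ht, H.connectsIn_single he hue hue⟩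

lemma mem_ball_succ {u x v : V} {t : ℕ} {e : Finset V} (he : e ∈ H.E) (hx : x ∈ e)
    (hxB : x ∈ H.ball u t) (hv : v ∈ e) : v ∈ H.ball u (t + 1) := by
  obtain ⟨l, hl, hc⟩ := H.mem_ball.mp hxB
  exact H.mem_ball.mpr ⟨l + 1, by omega, H.connectsIn_trans hc (H.connectsIn_single he hx hv)⟩

/-- Every boundary edge of a ball lies in the next ball, so it meets the next shell. -/
lemma sum_bdry_ball_le (u : V) (t : ℕ) :
    ∑ e ∈ H.bdry (H.ball u t), H.w e ≤ H.wS (H.ball u (t + 1) \ H.ball u t) := by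
  refine H.sum_w_le_wS (filter_subset _ _) fun e he => ?_
  obtain ⟨heE, ⟨x, hx⟩, ⟨v, hv⟩⟩ := mem_filter.mp he
  rw [mem_inter] at hx
  rw [mem_sdiff] at hv
  exact ⟨v, mem_inter.mpr ⟨hv.1, mem_sdiff.mpr ⟨H.mem_ball_succ heE hx.1 hx.2 hv.1, hv.2⟩⟩⟩

lemma one_add_gamma2_mul_wS_ball_le (hwv : ∀ v, 0 < H.wv v) (hγ : 0 ≤ H.gamma2) {u : V}
    {t : ℕ} (ht : 1 ≤ t) (hhalf : 2 * H.wS (H.ball u t) ≤ H.wS univ) :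
    (1 + H.gamma2 / 2) * H.wS (H.ball u t) ≤ H.wS (H.ball u (t + 1)) := by
  have hcheeger := H.gamma2_mul_wS_le hwv hγ ⟨u, H.self_mem_ball (hwv u) ht⟩ hhalf
  have hshell : H.wS (H.ball u (t + 1)) = H.wS (H.ball u t) +
      H.wS (H.ball u (t + 1) \ H.ball u t) := by
    rw [wS, wS, wS, ← sum_sdiff (H.ball_mono (Nat.le_succ t)), add_comm]
  linarith [H.sum_bdry_ball_le u t]

lemma pow_mul_wv_le_wS_ball (hwv : ∀ v, 0 < H.wv v) (hγ : 0 ≤ H.gamma2) (u : V) {k : ℕ}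
    (hk : 2 * H.wS (H.ball u k) ≤ H.wS univ) :
    (1 + H.gamma2 / 2) ^ k * H.wv u ≤ H.wS (H.ball u (k + 1)) := by
  induction k with
  | zero =>
    simpa [wS] using single_le_sum (fun v _ => H.wv_nonneg v) (H.self_mem_ball (hwv u) le_rfl)
  | succ k ih =>
    have hk' : 2 * H.wS (H.ball u k) ≤ H.wS univ :=
      le_trans (by gcongr; exact H.wS_mono (H.ball_mono (Nat.le_succ k))) hk
    calc (1 + H.gamma2 / 2) ^ (k + 1) * H.wv u
        = (1 + H.gamma2 / 2) * ((1 + H.gamma2 / 2) ^ k * H.wv u) := by ring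
      _ ≤ (1 + H.gamma2 / 2) * H.wS (H.ball u (k + 1)) := by gcongr; exact ih hk'
      _ ≤ H.wS (H.ball u (k + 1 + 1)) :=
        H.one_add_gamma2_mul_wS_ball_le hwv hγ (Nat.succ_pos k) hk

lemma wS_univ_lt_two_mul_wS_ball (hwv : ∀ v, 0 < H.wv v) (hγ : 0 ≤ H.gamma2) {u : V}
    {N : ℝ} (hN : H.wS univ ≤ N * H.wv u) {m : ℕ} (hm : N ≤ (1 + H.gamma2 / 2) ^ m) :
    H.wS univ < 2 * H.wS (H.ball u (m + 1)) := by
  by_contra! hsmall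
  have hW : 0 < H.wS univ := H.wS_pos hwv (univ_nonempty_iff.mpr ⟨u⟩)
  have hm' : 2 * H.wS (H.ball u m) ≤ H.wS univ :=
    le_trans (by gcongr; exact H.wS_mono (H.ball_mono (Nat.le_succ m))) hsmall
  have hgrow := H.pow_mul_wv_le_wS_ball hwv hγ u hm'
  nlinarith [mul_le_mul_of_nonneg_right hm (hwv u).le]

lemma hopDiam_le_two_mul {r : ℕ}
    (hr : ∀ u, H.wS univ < 2 * H.wS (H.ball u r)) : H.hopDiam ≤ 2 * r := by
  refine Nat.sInf_le fun u v => ?_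
  obtain ⟨x, hx⟩ : (H.ball u r ∩ H.ball v r).Nonempty := by
    by_contra! hdisj
    have hunion := H.wS_mono (subset_univ (H.ball u r ∪ H.ball v r))
    rw [wS, sum_union (disjoint_iff_inter_eq_empty.mpr hdisj)] at hunion
    change H.wS _ + H.wS _ ≤ _ at hunion
    linarith [hr u, hr v]
  obtain ⟨l₁, hl₁, hc₁⟩ := H.mem_ball.mp (mem_inter.mp hx).1
  obtain ⟨l₂, hl₂, hc₂⟩ := H.mem_ball.mp (mem_inter.mp hx).2
  exact ⟨l₁ + l₂, by omega, H.connectsIn_trans hc₁ (H.connectsIn_symm hc₂)⟩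

end EdgeWeightedHypergraph

/-- `log (1 + γ/2) ≥ γ/4` makes `⌈log N / log (1 + γ/2)⌉₊` at most `4 log N / γ + 1`, and
`γ ≤ 2 < 3 log 2` absorbs the additive constants into the main term. -/
lemma exists_le_one_add_half_pow {γ N : ℝ} (hγ : 0 < γ) (hγ2 : γ ≤ 2) (hN : 2 ≤ N) :
    ∃ m : ℕ, N ≤ (1 + γ / 2) ^ m ∧ 2 * ((m : ℝ) + 1) ≤ 20 * Real.log N / γ := by
  have hlogq : γ / 4 ≤ Real.log (1 + γ / 2) := by
    have hinv : 1 - (1 + γ / 2)⁻¹ = γ / (2 + γ) := by field_simp; ring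
    calc γ / 4 ≤ γ / (2 + γ) := div_le_div_of_nonneg_left hγ.le (by linarith) (by linarith)
      _ ≤ Real.log (1 + γ / 2) := hinv ▸ Real.one_sub_inv_le_log_of_pos (by linarith)
  have hlogN : 0.69 < Real.log N :=
    (Real.log_two_gt_d9.trans_le' (by norm_num)).trans_le (Real.log_le_log (by norm_num) hN)
  have hq : 0 < Real.log (1 + γ / 2) := by linarith
  refine ⟨⌈Real.log N / Real.log (1 + γ / 2)⌉₊, ?_, ?_⟩
  · rw [Real.le_pow_iff_log_le (by linarith) (by linarith)]
    exact (div_le_iff₀ hq).mp (Nat.le_ceil _)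
  · have hceil := Nat.ceil_lt_add_one (div_nonneg (by linarith : 0 ≤ Real.log N) hq.le)
    have hratio : Real.log N / Real.log (1 + γ / 2) ≤ 4 * Real.log N / γ := by
      rw [div_le_div_iff₀ hq hγ]; nlinarith
    have hconst : 4 ≤ 12 * Real.log N / γ := by rw [le_div_iff₀ hγ]; linarith
    have hsplit : 20 * Real.log N / γ = 2 * (4 * Real.log N / γ) + 12 * Real.log N / γ := by ring
    linarith

/-- There is a universal constant `C > 0` such that every hypergraph with at least two
vertices and `γ₂ > 0` has hop-diameter at most `C · ln(N_w) / γ₂`,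
where `N_w = max_u w(V)/w_u`. -/
theorem hypergraph_diameter_bound :
    ∃ C : ℝ, 0 < C ∧
      ∀ (V : Type) [Fintype V] [DecidableEq V] (H : EdgeWeightedHypergraph V),
        2 ≤ Fintype.card V → (∀ v : V, 0 < H.wv v) → 0 < H.gamma2 →
        (H.hopDiam : ℝ) ≤
          C * Real.log (sSup {x : ℝ | ∃ u : V, x = H.wS Finset.univ / H.wv u}) /
            H.gamma2 := by
  refine ⟨20, by norm_num, fun V _ _ H hcard hwv hγ => ?_⟩
  set N := sSup {x : ℝ | ∃ u : V, x = H.wS univ / H.wv u}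
  have hbdd : BddAbove {x : ℝ | ∃ u : V, x = H.wS univ / H.wv u} :=
    ((Set.finite_range fun u => H.wS univ / H.wv u).subset
      (by rintro _ ⟨u, rfl⟩; exact ⟨u, rfl⟩)).bddAbove
  have hN : ∀ u, H.wS univ ≤ N * H.wv u := fun u =>
    (div_le_iff₀ (hwv u)).mp (le_csSup hbdd ⟨u, rfl⟩)
  obtain ⟨u, hu⟩ := H.exists_two_mul_wv_le hcard
  have hN2 : 2 ≤ N := le_of_mul_le_mul_right (hu.trans (hN u)) (hwv u)
  obtain ⟨m, hmN, hm⟩ :=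
    exists_le_one_add_half_pow hγ (H.gamma2_le_two hcard hwv hγ.le) hN2
  have hdiam := H.hopDiam_le_two_mul fun u => H.wS_univ_lt_two_mul_wS_ball hwv hγ.le (hN u) hmN
  calc (H.hopDiam : ℝ) ≤ 2 * ((m : ℝ) + 1) := by exact_mod_cast hdiam
    _ ≤ 20 * Real.log N / H.gamma2 := hm
end

section
/- Let G = (V,E) be a finite simple undirected d-regular graph with d ≥ 1 and |V| ≥ 2. Then γ₂/4 ≤ λ_∞/d ≤ γ₂; that is, γ₂ ≤ 4·λ_∞/d and λ_∞ ≤ d·γ₂. -/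
open Finset

/-- The Poincaré-type parameter `λ_∞` of Bobkov, Houdré and Tetali:
the infimum over nonzero `f` with `Σ_u f u = 0` of
`(Σ_u max_{v ∈ N(u)} (f u - f v)²) / (Σ_u f u²)`. -/
noncomputable def lamInf {V : Type*} [Fintype V] [DecidableEq V]
    (G : SimpleGraph V) [DecidableRel G.Adj] : ℝ :=
  sInf {x : ℝ | ∃ f : V → ℝ, f ≠ 0 ∧ (∑ u : V, f u) = 0 ∧
    x = (∑ u : V, sSup {y : ℝ | ∃ v ∈ G.neighborFinset u, (f u - f v) ^ 2 = y}) /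
      ∑ u : V, f u ^ 2}

/-- The spectral parameter `γ₂` of the hypergraph obtained from a `d`-regular graph `G`
by replacing each vertex `u` by the unit-weight hyperedge `{u} ∪ N(u)`:
the infimum over nonzero `f` with `Σ_u f u = 0` of
`(Σ_u max_{i,j ∈ {u} ∪ N(u)} (f i - f j)²) / (d · Σ_u f u²)`. -/
noncomputable def gammaTwoVert {V : Type*} [Fintype V] [DecidableEq V]
    (G : SimpleGraph V) [DecidableRel G.Adj] (d : ℕ) : ℝ :=
  sInf {x : ℝ | ∃ f : V → ℝ, f ≠ 0 ∧ (∑ u : V, f u) = 0 ∧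
    x = (∑ u : V, sSup {y : ℝ | ∃ i ∈ insert u (G.neighborFinset u),
          ∃ j ∈ insert u (G.neighborFinset u), (f i - f j) ^ 2 = y}) /
      (d * ∑ u : V, f u ^ 2)}

lemma aux_sets {V : Type*} [Fintype V] [DecidableEq V]
    (G : SimpleGraph V) [DecidableRel G.Adj] (d : ℕ) (hd : 1 ≤ d)
    (hreg : G.IsRegularOfDegree d) (f : V → ℝ) (u : V) :
    0 ≤ sSup {y : ℝ | ∃ v ∈ G.neighborFinset u, (f u - f v) ^ 2 = y} ∧
    sSup {y : ℝ | ∃ v ∈ G.neighborFinset u, (f u - f v) ^ 2 = y} ≤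
      sSup {y : ℝ | ∃ i ∈ insert u (G.neighborFinset u),
        ∃ j ∈ insert u (G.neighborFinset u), (f i - f j) ^ 2 = y} ∧
    sSup {y : ℝ | ∃ i ∈ insert u (G.neighborFinset u),
        ∃ j ∈ insert u (G.neighborFinset u), (f i - f j) ^ 2 = y} ≤
      4 * sSup {y : ℝ | ∃ v ∈ G.neighborFinset u, (f u - f v) ^ 2 = y} := by
  set Nu := G.neighborFinset u with hNu
  have hNune : Nu.Nonempty := by
    rw [← Finset.card_pos, hNu, SimpleGraph.card_neighborFinset_eq_degree, hreg u]
    omega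
  set T1 := {y : ℝ | ∃ v ∈ Nu, (f u - f v) ^ 2 = y} with hT1
  set T2 := {y : ℝ | ∃ i ∈ insert u Nu, ∃ j ∈ insert u Nu, (f i - f j) ^ 2 = y} with hT2
  have hfin1 : T1.Finite := by
    have : T1 = (fun v => (f u - f v) ^ 2) '' ↑Nu := by
      ext y; simp [hT1, Set.mem_image]
    rw [this]; exact (Nu.finite_toSet).image _
  have hfin2 : T2.Finite := by
    apply Set.Finite.subset (Set.Finite.image2 (fun i j => (f i - f j) ^ 2)
      (Finset.finite_toSet (insert u Nu)) (Finset.finite_toSet (insert u Nu)))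
    rintro y ⟨i, hi, j, hj, rfl⟩
    exact Set.mem_image2_of_mem (Finset.mem_coe.mpr hi) (Finset.mem_coe.mpr hj)
  obtain ⟨w, hw⟩ := hNune
  have hmem1 : ∀ v ∈ Nu, (f u - f v) ^ 2 ∈ T1 := fun v hv => ⟨v, hv, rfl⟩
  have hle1 : ∀ v ∈ Nu, (f u - f v) ^ 2 ≤ sSup T1 := fun v hv =>
    le_csSup hfin1.bddAbove (hmem1 v hv)
  have hne1 : T1.Nonempty := ⟨_, hmem1 w hw⟩
  have hne2 : T2.Nonempty := ⟨0, u, Finset.mem_insert_self u Nu, u, Finset.mem_insert_self u Nu, by ring⟩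
  have h0 : 0 ≤ sSup T1 := le_trans (sq_nonneg _) (hle1 w hw)
  refine ⟨h0, ?_, ?_⟩
  · refine csSup_le_csSup hfin2.bddAbove hne1 ?_
    rintro y ⟨v, hv, rfl⟩
    exact ⟨u, Finset.mem_insert_self u Nu, v, Finset.mem_insert_of_mem hv, rfl⟩
  · refine csSup_le hne2 ?_
    rintro y ⟨i, hi, j, hj, rfl⟩
    rcases Finset.mem_insert.1 hi with hi | hi <;>
      rcases Finset.mem_insert.1 hj with hj | hj
    · subst hi; subst hj; nlinarith
    · subst hi; have := hle1 j hj; nlinarith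
    · subst hj; have := hle1 i hi; nlinarith
    · have h1 := hle1 i hi; have h2 := hle1 j hj
      nlinarith [sq_nonneg (f i + f j - 2 * f u)]

lemma exists_good_f {V : Type*} [Fintype V] [DecidableEq V] (hV : 2 ≤ Fintype.card V) :
    ∃ f : V → ℝ, f ≠ 0 ∧ (∑ u : V, f u) = 0 := by
  obtain ⟨a, b, hab⟩ := Fintype.exists_pair_of_one_lt_card hV
  refine ⟨fun u => (if u = a then (1:ℝ) else 0) - (if u = b then (1:ℝ) else 0), ?_, ?_⟩
  · intro h
    have := congrFun h a
    simp [hab] at this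
  · simp [Finset.sum_sub_distrib]


lemma sum_ineqs {V : Type*} [Fintype V] [DecidableEq V]
    (G : SimpleGraph V) [DecidableRel G.Adj] (d : ℕ) (hd : 1 ≤ d)
    (hreg : G.IsRegularOfDegree d) (f : V → ℝ) (hf : f ≠ 0) :
    0 ≤ (∑ u : V, sSup {y : ℝ | ∃ v ∈ G.neighborFinset u, (f u - f v) ^ 2 = y}) ∧
    (∑ u : V, sSup {y : ℝ | ∃ v ∈ G.neighborFinset u, (f u - f v) ^ 2 = y}) ≤
      (∑ u : V, sSup {y : ℝ | ∃ i ∈ insert u (G.neighborFinset u),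
          ∃ j ∈ insert u (G.neighborFinset u), (f i - f j) ^ 2 = y}) ∧
    (∑ u : V, sSup {y : ℝ | ∃ i ∈ insert u (G.neighborFinset u),
          ∃ j ∈ insert u (G.neighborFinset u), (f i - f j) ^ 2 = y}) ≤
      4 * (∑ u : V, sSup {y : ℝ | ∃ v ∈ G.neighborFinset u, (f u - f v) ^ 2 = y}) ∧
    0 < ∑ u : V, f u ^ 2 := by
  refine ⟨Finset.sum_nonneg fun u _ => (aux_sets G d hd hreg f u).1,
    Finset.sum_le_sum fun u _ => (aux_sets G d hd hreg f u).2.1, ?_, ?_⟩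
  · rw [Finset.mul_sum]
    exact Finset.sum_le_sum fun u _ => (aux_sets G d hd hreg f u).2.2
  · obtain ⟨u, hu⟩ := Function.ne_iff.mp hf
    exact Finset.sum_pos' (fun v _ => sq_nonneg _)
      ⟨u, Finset.mem_univ u, sq_pos_of_ne_zero hu⟩


/-- For a `d`-regular graph: `γ₂/4 ≤ λ_∞/d ≤ γ₂`, i.e.
`γ₂ ≤ 4 λ_∞ / d` and `λ_∞ ≤ d γ₂`. -/
theorem gammaTwo_lamInf_relation {V : Type*} [Fintype V] [DecidableEq V]
    (G : SimpleGraph V) [DecidableRel G.Adj] (d : ℕ) (hd : 1 ≤ d)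
    (hreg : G.IsRegularOfDegree d) (hV : 2 ≤ Fintype.card V) :
    gammaTwoVert G d ≤ 4 * lamInf G / d ∧ lamInf G ≤ d * gammaTwoVert G d := by
  classical
  have hd0 : (0:ℝ) < d := by exact_mod_cast Nat.lt_of_lt_of_le Nat.zero_lt_one hd
  unfold gammaTwoVert lamInf
  set SS1 := {x : ℝ | ∃ f : V → ℝ, f ≠ 0 ∧ (∑ u : V, f u) = 0 ∧
    x = (∑ u : V, sSup {y : ℝ | ∃ v ∈ G.neighborFinset u, (f u - f v) ^ 2 = y}) /
      ∑ u : V, f u ^ 2} with hSS1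
  set SS2 := {x : ℝ | ∃ f : V → ℝ, f ≠ 0 ∧ (∑ u : V, f u) = 0 ∧
    x = (∑ u : V, sSup {y : ℝ | ∃ i ∈ insert u (G.neighborFinset u),
          ∃ j ∈ insert u (G.neighborFinset u), (f i - f j) ^ 2 = y}) /
      (d * ∑ u : V, f u ^ 2)} with hSS2
  have hbdd1 : BddBelow SS1 := by
    refine ⟨0, ?_⟩
    rintro x ⟨f, hf, hs, rfl⟩
    obtain ⟨h0, _, _, hS⟩ := sum_ineqs G d hd hreg f hf
    exact div_nonneg h0 hS.le
  have hbdd2 : BddBelow SS2 := by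
    refine ⟨0, ?_⟩
    rintro x ⟨f, hf, hs, rfl⟩
    obtain ⟨h0, h1, _, hS⟩ := sum_ineqs G d hd hreg f hf
    exact div_nonneg (h0.trans h1) (by positivity)
  obtain ⟨g, hg, hgs⟩ := exists_good_f (V := V) hV
  have hne1 : SS1.Nonempty := ⟨_, g, hg, hgs, rfl⟩
  have hne2 : SS2.Nonempty := ⟨_, g, hg, hgs, rfl⟩
  constructor
  · have hsuff : sInf SS2 * d / 4 ≤ sInf SS1 := by
      apply le_csInf hne1
      rintro x ⟨f, hf, hs, rfl⟩
      obtain ⟨h0, h1, h2, hS⟩ := sum_ineqs G d hd hreg f hf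
      set A := (∑ u : V, sSup {y : ℝ | ∃ v ∈ G.neighborFinset u, (f u - f v) ^ 2 = y})
      set B := (∑ u : V, sSup {y : ℝ | ∃ i ∈ insert u (G.neighborFinset u),
          ∃ j ∈ insert u (G.neighborFinset u), (f i - f j) ^ 2 = y})
      set S := ∑ u : V, f u ^ 2
      have hmem : B / (d * S) ∈ SS2 := ⟨f, hf, hs, rfl⟩
      have hle : sInf SS2 ≤ B / (d * S) := csInf_le hbdd2 hmem
      have h3 : B / (d * S) ≤ (4 * A) / (d * S) := by
        exact (div_le_div_iff_of_pos_right (by positivity)).mpr h2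
      have h4 : (4 * A) / (d * S) = 4 * (A / S) / d := by
        field_simp
      have h5 : sInf SS2 ≤ 4 * (A / S) / d := by
        calc sInf SS2 ≤ B / (d * S) := hle
          _ ≤ (4 * A) / (d * S) := h3
          _ = 4 * (A / S) / d := h4
      have h6 : sInf SS2 * d ≤ 4 * (A / S) := (le_div_iff₀ hd0).mp h5
      linarith
    rw [le_div_iff₀ hd0]
    linarith
  · have hsuff : sInf SS1 / d ≤ sInf SS2 := by
      apply le_csInf hne2
      rintro x ⟨f, hf, hs, rfl⟩
      obtain ⟨h0, h1, h2, hS⟩ := sum_ineqs G d hd hreg f hf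
      set A := (∑ u : V, sSup {y : ℝ | ∃ v ∈ G.neighborFinset u, (f u - f v) ^ 2 = y})
      set B := (∑ u : V, sSup {y : ℝ | ∃ i ∈ insert u (G.neighborFinset u),
          ∃ j ∈ insert u (G.neighborFinset u), (f i - f j) ^ 2 = y})
      set S := ∑ u : V, f u ^ 2
      have hmem : A / S ∈ SS1 := ⟨f, hf, hs, rfl⟩
      have hle : sInf SS1 ≤ A / S := csInf_le hbdd1 hmem
      have h3 : A / S ≤ B / S := (div_le_div_iff_of_pos_right hS).mpr h1
      have h4 : B / S = d * (B / (d * S)) := by field_simp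
      rw [div_le_iff₀ hd0]
      calc sInf SS1 ≤ A / S := hle
        _ ≤ B / S := h3
        _ = d * (B / (d * S)) := h4
        _ = B / (d * S) * d := by ring
    rw [div_le_iff₀ hd0] at hsuff
    linarith
end

section
/- Let H = (V,E,w) be an edge-weighted hypergraph with E nonempty, let r_min := min_{e ∈ E} |e|, and let f ∈ ℝ^V be a nonzero vector with f ⊥_w 1. Then there exists a nonempty set S ⊆ V with w(S) ≤ w(V)/2 and φ(S) ≤ D_w(f) + 2·√(D_w(f)/r_min). -/
/-! Shift `f` by a weighted median `c`. Since `f ⊥_w 1`, this leaves the numerator of the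
discrepancy ratio unchanged and only increases the denominator. The positive and negative parts
of `f - c` split the numerator subadditively and the denominator additively, so one of them, `g`,
has ratio at most `D = D_w(f)`, and it is supported on at most half of the total weight.

Sweep over the superlevel sets `{g ≥ x}`, giving the level `x` the weight `d(x²)`: the volumes
then add up to `‖g‖²_w` and the cuts to `∑ₑ wₑ (Mₑ² - mₑ²)`, where `Mₑ` and `mₑ` are the largest
and smallest values of `g` on `e`. Writing `Mₑ² - mₑ² = (Mₑ - mₑ)² + 2 mₑ (Mₑ - mₑ)`, the
Cauchy–Schwarz inequality and `|e| mₑ² ≤ ∑_{v ∈ e} g v²` bound the cuts by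
`(D + 2 √(D / r_min)) ‖g‖²_w`, so some superlevel set has expansion at most `D + 2 √(D / r_min)`. -/

open Finset

/-- An edge-weighted hypergraph on a finite vertex set `V`: a finite set of hyperedges,
each a nonempty subset of `V`, with positive weights. -/
structure EWHypergraph (V : Type*) [Fintype V] [DecidableEq V] where
  E : Finset (Finset V)
  w : Finset V → ℝ
  edge_nonempty : ∀ e ∈ E, e.Nonempty
  w_pos : ∀ e ∈ E, 0 < w e

namespace EWHypergraph

variable {V : Type*} [Fintype V] [DecidableEq V]

/-- The weight of a vertex: total weight of hyperedges containing it. -/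
noncomputable def wv (H : EWHypergraph V) (v : V) : ℝ :=
  ∑ e ∈ H.E.filter (fun e => v ∈ e), H.w e

/-- The weight of a set of vertices. -/
noncomputable def wS (H : EWHypergraph V) (S : Finset V) : ℝ := ∑ v ∈ S, H.wv v

/-- The boundary of `S`: hyperedges meeting both `S` and its complement. -/
noncomputable def bdry (H : EWHypergraph V) (S : Finset V) : Finset (Finset V) :=
  H.E.filter (fun e => (e ∩ S).Nonempty ∧ (e \ S).Nonempty)

/-- The expansion `φ(S)` of a set of vertices. -/
noncomputable def phi (H : EWHypergraph V) (S : Finset V) : ℝ :=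
  (∑ e ∈ H.bdry S, H.w e) / H.wS S

/-- `max_{u,v ∈ e} (f u - f v)^2`. -/
noncomputable def edgeDisc (H : EWHypergraph V) (f : V → ℝ) (e : Finset V) : ℝ :=
  sSup {x : ℝ | ∃ u ∈ e, ∃ v ∈ e, (f u - f v) ^ 2 = x}

/-- The discrepancy ratio `D_w(f)`. -/
noncomputable def disc (H : EWHypergraph V) (f : V → ℝ) : ℝ :=
  (∑ e ∈ H.E, H.w e * H.edgeDisc f e) / ∑ u : V, H.wv u * f u ^ 2

/-- The weighted inner product `⟨f,g⟩_w`. -/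
noncomputable def wip (H : EWHypergraph V) (f g : V → ℝ) : ℝ :=
  ∑ u : V, H.wv u * f u * g u

/-- `γ₂`: infimum of the discrepancy ratio over nonzero `f ⊥_w 1`. -/
noncomputable def gamma2 (H : EWHypergraph V) : ℝ :=
  sInf {x : ℝ | ∃ f : V → ℝ, f ≠ 0 ∧ H.wip f (fun _ => 1) = 0 ∧ H.disc f = x}

/-- The hypergraph expansion `φ_H`. -/
noncomputable def phiH (H : EWHypergraph V) : ℝ :=
  sInf {x : ℝ | ∃ S : Finset V, S.Nonempty ∧ S ≠ univ ∧
    x = max (H.phi S) (H.phi Sᶜ)}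

/-- `ζ_k`: inf over `k`-tuples of nonzero pairwise `w`-orthogonal vectors of the
sup of the discrepancy ratio over nonzero vectors in their span. -/
noncomputable def zeta (H : EWHypergraph V) (k : ℕ) : ℝ :=
  sInf {x : ℝ | ∃ f : Fin k → V → ℝ, (∀ i, f i ≠ 0) ∧
    (∀ i j, i ≠ j → H.wip (f i) (f j) = 0) ∧
    x = sSup {y : ℝ | ∃ h : V → ℝ, h ≠ 0 ∧
      h ∈ Submodule.span ℝ (Set.range f) ∧ H.disc h = y}}

/-- `ξ_k`: inf over `k`-tuples of nonzero pairwise `w`-orthogonal vectors of the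
maximum discrepancy ratio among them. -/
noncomputable def xi (H : EWHypergraph V) (k : ℕ) : ℝ :=
  sInf {x : ℝ | ∃ f : Fin k → V → ℝ, (∀ i, f i ≠ 0) ∧
    (∀ i j, i ≠ j → H.wip (f i) (f j) = 0) ∧
    x = sSup {y : ℝ | ∃ i, H.disc (f i) = y}}

/-- A sequence of procedural minimizers: `f 0` is a nonzero constant vector, each `f i`
is nonzero and `w`-orthogonal to the previous ones, and attains the infimum of the
discrepancy ratio over nonzero vectors `w`-orthogonal to the previous ones. -/
def IsProcMin (H : EWHypergraph V) {k : ℕ} (f : Fin k → V → ℝ) : Prop :=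
  (∀ i, f i ≠ 0) ∧
  (∀ i : Fin k, (i : ℕ) = 0 → ∃ c : ℝ, f i = fun _ => c) ∧
  (∀ i j : Fin k, (j : ℕ) < (i : ℕ) → H.wip (f i) (f j) = 0) ∧
  (∀ i : Fin k, 0 < (i : ℕ) → H.disc (f i) =
    sInf {x : ℝ | ∃ g : V → ℝ, g ≠ 0 ∧
      (∀ j : Fin k, (j : ℕ) < (i : ℕ) → H.wip g (f j) = 0) ∧ H.disc g = x})

end EWHypergraph

theorem sq_posPart_sub_add_sq_negPart_sub_le (a b : ℝ) :
    (a⁺ - b⁺) ^ 2 + (a⁻ - b⁻) ^ 2 ≤ (a - b) ^ 2 := by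
  have hopp : (a⁺ - b⁺) * (a⁻ - b⁻) ≤ 0 := by
    rcases le_total a b with h | h
    · exact mul_nonpos_of_nonpos_of_nonneg (sub_nonpos.2 (posPart_mono h))
        (sub_nonneg.2 (negPart_anti h))
    · exact mul_nonpos_of_nonneg_of_nonpos (sub_nonneg.2 (posPart_mono h))
        (sub_nonpos.2 (negPart_anti h))
  have hab : a - b = (a⁺ - b⁺) - (a⁻ - b⁻) := by
    linarith [posPart_sub_negPart a, posPart_sub_negPart b]
  rw [hab]
  nlinarith

theorem posPart_sq_add_negPart_sq (a : ℝ) : a⁺ ^ 2 + a⁻ ^ 2 = a ^ 2 := by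
  rcases le_total 0 a with h | h
  · rw [posPart_eq_self.2 h, negPart_eq_zero.2 h]
    ring
  · rw [posPart_eq_zero.2 h, negPart_eq_neg.2 h]
    ring

theorem exists_pos_and_le_mul_of_add_le {a₁ a₂ b₁ b₂ D : ℝ} (ha₁ : 0 ≤ a₁) (ha₂ : 0 ≤ a₂)
    (hb₁ : 0 ≤ b₁) (hb₂ : 0 ≤ b₂) (hb : 0 < b₁ + b₂) (h : a₁ + a₂ ≤ D * (b₁ + b₂)) :
    (0 < b₁ ∧ a₁ ≤ D * b₁) ∨ (0 < b₂ ∧ a₂ ≤ D * b₂) := by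
  by_contra! hcon
  obtain ⟨h₁, h₂⟩ := hcon
  rcases hb₁.eq_or_lt with rfl | hb₁ <;> rcases hb₂.eq_or_lt with rfl | hb₂
  · simp at hb
  · linarith [h₂ hb₂]
  · linarith [h₁ hb₁]
  · linarith [h₁ hb₁, h₂ hb₂]

theorem exists_weighted_median {ι : Type*} [Fintype ι] [Nonempty ι] {μ : ι → ℝ}
    (hμ : ∀ i, 0 ≤ μ i) (f : ι → ℝ) :
    ∃ c, ∑ i with c < f i, μ i ≤ (∑ i, μ i) / 2 ∧ ∑ i with f i < c, μ i ≤ (∑ i, μ i) / 2 := by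
  set W := ∑ i, μ i
  set G := (univ.image f).filter fun x => W / 2 ≤ ∑ i with f i ≤ x, μ i
  obtain ⟨j, hj⟩ := Finite.exists_max f
  have hG : G.Nonempty := by
    refine ⟨f j, mem_filter.2 ⟨mem_image_of_mem f (mem_univ j), ?_⟩⟩
    rw [filter_true_of_mem fun i _ => hj i]
    linarith [sum_nonneg fun i (_ : i ∈ univ) => hμ i]
  set c := G.min' hG
  have hc : W / 2 ≤ ∑ i with f i ≤ c, μ i := (mem_filter.1 (G.min'_mem hG)).2
  refine ⟨c, ?_, ?_⟩
  · have := sum_filter_add_sum_filter_not univ (fun i => f i ≤ c) μ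
    simp only [not_le] at this
    linarith
  · by_contra! hlt
    have hne : (univ.filter fun i => f i < c).Nonempty := by
      refine nonempty_of_sum_ne_zero (f := μ) fun h0 => ?_
      linarith [sum_nonneg fun i (_ : i ∈ univ) => hμ i]
    obtain ⟨k, hk, hmax⟩ := exists_max_image _ f hne
    have hkc : f k < c := (mem_filter.1 hk).2
    have hkG : f k ∉ G := fun h => (G.min'_le _ h).not_gt hkc
    have hsmall : ∑ i with f i ≤ f k, μ i < W / 2 :=
      not_le.1 fun h => hkG (mem_filter.2 ⟨mem_image_of_mem f (mem_univ k), h⟩)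
    have hsub : ∑ i with f i < c, μ i ≤ ∑ i with f i ≤ f k, μ i :=
      sum_le_sum_of_subset_of_nonneg (fun i hi => mem_filter.2 ⟨mem_univ i, hmax i hi⟩)
        fun i _ _ => hμ i
    linarith

theorem Finset.exists_strictMonoOn_enum {α : Type*} [LinearOrder α] (T : Finset α) {n : ℕ}
    (hT : T.card = n + 1) :
    ∃ t : ℕ → α, StrictMonoOn t (Set.Iic n) ∧ (∀ i ≤ n, t i ∈ T) ∧ ∀ x ∈ T, ∃ i ≤ n, t i = x := by
  refine ⟨fun i => T.orderEmbOfFin hT ⟨min i n, by omega⟩, ?_,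
    fun i _ => T.orderEmbOfFin_mem hT _, fun x hx => ?_⟩
  · intro i hi j hj hij
    simp only [Set.mem_Iic] at hi hj
    apply (T.orderEmbOfFin hT).strictMono
    simp only [Fin.mk_lt_mk, min_eq_left hi, min_eq_left hj, hij]
  · rw [← SetLike.mem_coe, ← T.range_orderEmbOfFin hT] at hx
    obtain ⟨k, rfl⟩ := hx
    have hk : (k : ℕ) ≤ n := Nat.lt_succ_iff.1 k.2
    exact ⟨k, hk, by simp only [min_eq_left hk, Fin.eta]⟩

theorem StrictMonoOn.sum_range_ite_sub {α M : Type*} [LinearOrder α] [AddCommGroup M]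
    {t : ℕ → α} {n : ℕ} (ht : StrictMonoOn t (Set.Iic n)) (φ : ℕ → M) {a b : ℕ}
    (hab : a ≤ b) (hb : b ≤ n) :
    ∑ i ∈ range n, (if t a < t (i + 1) ∧ t (i + 1) ≤ t b then φ (i + 1) - φ i else 0) =
      φ b - φ a := by
  rw [← sum_filter, ← sum_Ico_sub φ hab]
  refine sum_congr ?_ fun _ _ => rfl
  ext i
  have hmem : ∀ k ≤ n, k ∈ Set.Iic n := fun k hk => hk
  simp only [mem_filter, mem_range, mem_Ico]
  constructor
  · rintro ⟨hi, h₁, h₂⟩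
    rw [ht.lt_iff_lt (hmem a (hab.trans hb)) (hmem _ hi)] at h₁
    rw [ht.le_iff_le (hmem _ hi) (hmem b hb)] at h₂
    omega
  · rintro ⟨h₁, h₂⟩
    exact ⟨by omega, (ht.lt_iff_lt (hmem a (hab.trans hb)) (hmem _ (by omega))).2 (by omega),
      (ht.le_iff_le (hmem _ (by omega)) (hmem b hb)).2 (by omega)⟩

namespace EWHypergraph

variable {V : Type*} [Fintype V] [DecidableEq V] (H : EWHypergraph V)

noncomputable def energy (f : V → ℝ) : ℝ := ∑ e ∈ H.E, H.w e * H.edgeDisc f e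

noncomputable def sqNorm (f : V → ℝ) : ℝ := ∑ u, H.wv u * f u ^ 2

theorem wv_nonneg (v : V) : 0 ≤ H.wv v :=
  sum_nonneg fun e he => (H.w_pos e (mem_filter.1 he).1).le

theorem wS_mono {S T : Finset V} (h : S ⊆ T) : H.wS S ≤ H.wS T :=
  sum_le_sum_of_subset_of_nonneg h fun v _ _ => H.wv_nonneg v

theorem wS_pos (hw : ∀ v, 0 < H.wv v) {S : Finset V} (hS : S.Nonempty) : 0 < H.wS S :=
  sum_pos (fun v _ => hw v) hS

theorem sum_wv_mul_eq_sum_w_mul_sum (h : V → ℝ) :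
    ∑ v, H.wv v * h v = ∑ e ∈ H.E, H.w e * ∑ v ∈ e, h v := by
  simp only [wv, sum_mul, sum_filter]
  rw [sum_comm]
  refine sum_congr rfl fun e _ => ?_
  simp only [ite_mul, zero_mul]
  rw [sum_ite_mem, univ_inter, mul_sum]

theorem edgeDisc_eq_sq (f : V → ℝ) {e : Finset V} (he : e.Nonempty) :
    H.edgeDisc f e = (e.sup' he f - e.inf' he f) ^ 2 := by
  obtain ⟨u, hu, hfu⟩ := exists_mem_eq_sup' he f
  obtain ⟨v, hv, hfv⟩ := exists_mem_eq_inf' he f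
  refine IsGreatest.csSup_eq ⟨⟨u, hu, v, hv, by rw [hfu, hfv]⟩, ?_⟩
  rintro x ⟨a, ha, b, hb, rfl⟩
  apply sq_le_sq'
  · linarith [le_sup' f hb, inf'_le f ha]
  · linarith [le_sup' f ha, inf'_le f hb]

theorem edgeDisc_nonneg (f : V → ℝ) (e : Finset V) : 0 ≤ H.edgeDisc f e :=
  Real.sSup_nonneg <| by rintro x ⟨u, -, v, -, rfl⟩; positivity

theorem edgeDisc_le_sq_of_forall_mem_Icc {f : V → ℝ} {e : Finset V} {a b : ℝ}
    (h : ∀ v ∈ e, f v ∈ Set.Icc a b) : H.edgeDisc f e ≤ (b - a) ^ 2 := by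
  refine Real.sSup_le ?_ (sq_nonneg _)
  rintro x ⟨u, hu, v, hv, rfl⟩
  obtain ⟨hu₁, hu₂⟩ := h u hu
  obtain ⟨hv₁, hv₂⟩ := h v hv
  apply sq_le_sq' <;> linarith

theorem edgeDisc_sub_const (f : V → ℝ) (c : ℝ) (e : Finset V) :
    H.edgeDisc (fun v => f v - c) e = H.edgeDisc f e := by
  simp only [edgeDisc, sub_sub_sub_cancel_right]

theorem edgeDisc_posPart_add_negPart_le (f : V → ℝ) {e : Finset V} (he : e.Nonempty) :
    H.edgeDisc f⁺ e + H.edgeDisc f⁻ e ≤ H.edgeDisc f e := by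
  have hpos : H.edgeDisc f⁺ e ≤ ((e.sup' he f)⁺ - (e.inf' he f)⁺) ^ 2 :=
    H.edgeDisc_le_sq_of_forall_mem_Icc fun v hv =>
      ⟨posPart_mono (inf'_le f hv), posPart_mono (le_sup' f hv)⟩
  have hneg : H.edgeDisc f⁻ e ≤ ((e.inf' he f)⁻ - (e.sup' he f)⁻) ^ 2 :=
    H.edgeDisc_le_sq_of_forall_mem_Icc fun v hv =>
      ⟨negPart_anti (le_sup' f hv), negPart_anti (inf'_le f hv)⟩
  have := sq_posPart_sub_add_sq_negPart_sub_le (e.sup' he f) (e.inf' he f)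
  rw [H.edgeDisc_eq_sq f he]
  nlinarith

theorem energy_sub_const (f : V → ℝ) (c : ℝ) : H.energy (fun v => f v - c) = H.energy f := by
  simp only [energy, edgeDisc_sub_const]

theorem energy_posPart_add_negPart_le (f : V → ℝ) :
    H.energy f⁺ + H.energy f⁻ ≤ H.energy f := by
  rw [energy, energy, ← sum_add_distrib]
  refine sum_le_sum fun e he => ?_
  rw [← mul_add]
  exact mul_le_mul_of_nonneg_left (H.edgeDisc_posPart_add_negPart_le f (H.edge_nonempty e he))
    (H.w_pos e he).le

theorem energy_nonneg (f : V → ℝ) : 0 ≤ H.energy f :=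
  sum_nonneg fun e he => mul_nonneg (H.w_pos e he).le (H.edgeDisc_nonneg f e)

theorem sqNorm_nonneg (f : V → ℝ) : 0 ≤ H.sqNorm f :=
  sum_nonneg fun u _ => mul_nonneg (H.wv_nonneg u) (sq_nonneg _)

theorem disc_nonneg (f : V → ℝ) : 0 ≤ H.disc f :=
  div_nonneg (H.energy_nonneg f) (H.sqNorm_nonneg f)

theorem energy_eq_disc_mul_sqNorm {f : V → ℝ} (hf : H.sqNorm f ≠ 0) :
    H.energy f = H.disc f * H.sqNorm f :=
  (div_mul_cancel₀ _ hf).symm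

theorem sqNorm_pos {f : V → ℝ} (hw : ∀ v, 0 < H.wv v) (hf : f ≠ 0) : 0 < H.sqNorm f := by
  obtain ⟨v, hv⟩ := Function.ne_iff.1 hf
  replace hv : f v ≠ 0 := hv
  exact sum_pos' (fun u _ => mul_nonneg (H.wv_nonneg u) (sq_nonneg _))
    ⟨v, mem_univ v, mul_pos (hw v) (by positivity)⟩

theorem sqNorm_posPart_add_negPart (f : V → ℝ) : H.sqNorm f⁺ + H.sqNorm f⁻ = H.sqNorm f := by
  simp only [sqNorm, ← sum_add_distrib, ← mul_add, Pi.posPart_apply, Pi.negPart_apply,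
    posPart_sq_add_negPart_sq]

theorem sqNorm_sub_const {f : V → ℝ} (horth : H.wip f (fun _ => 1) = 0) (c : ℝ) :
    H.sqNorm (fun v => f v - c) = H.sqNorm f + c ^ 2 * H.wS univ := by
  simp only [wip, mul_one] at horth
  have hexp : ∀ u, H.wv u * (f u - c) ^ 2 = H.wv u * f u ^ 2 - 2 * c * (H.wv u * f u) +
      c ^ 2 * H.wv u := fun u => by ring
  simp only [sqNorm, wS, hexp, sum_add_distrib, sum_sub_distrib, ← mul_sum, horth]
  ring

noncomputable def superlevelSet (g : V → ℝ) (x : ℝ) : Finset V := univ.filter fun v => x ≤ g v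

theorem crosses_superlevelSet_iff {g : V → ℝ} {e : Finset V} (he : e.Nonempty) {x : ℝ} :
    ((e ∩ superlevelSet g x).Nonempty ∧ (e \ superlevelSet g x).Nonempty) ↔
      e.inf' he g < x ∧ x ≤ e.sup' he g := by
  rw [inf'_lt_iff, le_sup'_iff, and_comm]
  simp only [Finset.Nonempty, mem_inter, mem_sdiff, superlevelSet, mem_filter, mem_univ,
    true_and, not_le]

theorem rho_mul_sum_w_mul_sq_sInf_le {g : V → ℝ} (hg : 0 ≤ g) {ρ : ℝ}
    (hρe : ∀ e ∈ H.E, ρ ≤ e.card) :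
    ρ * ∑ e ∈ H.E, H.w e * sInf (g '' e) ^ 2 ≤ H.sqNorm g := by
  rw [sqNorm, H.sum_wv_mul_eq_sum_w_mul_sum, mul_sum]
  refine sum_le_sum fun e he => ?_
  have hne := H.edge_nonempty e he
  have hm0 : 0 ≤ e.inf' hne g := le_inf' hne g fun v _ => hg v
  calc ρ * (H.w e * sInf (g '' e) ^ 2)
      ≤ H.w e * (e.card * e.inf' hne g ^ 2) := by
        rw [← inf'_eq_csInf_image e hne]
        have := mul_le_mul_of_nonneg_right (hρe e he)
          (mul_nonneg (H.w_pos e he).le (sq_nonneg (e.inf' hne g)))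
        linarith
    _ ≤ H.w e * ∑ v ∈ e, g v ^ 2 := by
        refine mul_le_mul_of_nonneg_left ?_ (H.w_pos e he).le
        rw [← nsmul_eq_mul, ← sum_const]
        exact sum_le_sum fun v hv => pow_le_pow_left₀ hm0 (inf'_le g hv) 2

theorem sum_w_mul_sq_sSup_sub_sq_sInf_le {g : V → ℝ} (hg : 0 ≤ g) {ρ D : ℝ} (hρ : 0 < ρ)
    (hρe : ∀ e ∈ H.E, ρ ≤ e.card) (hD : 0 ≤ D) (hgD : H.energy g ≤ D * H.sqNorm g) :
    ∑ e ∈ H.E, H.w e * (sSup (g '' e) ^ 2 - sInf (g '' e) ^ 2) ≤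
      (D + 2 * √(D / ρ)) * H.sqNorm g := by
  set S := H.sqNorm g
  set M : Finset V → ℝ := fun e => sSup (g '' e)
  set m : Finset V → ℝ := fun e => sInf (g '' e)
  have hA : ∑ e ∈ H.E, H.w e * m e ^ 2 ≤ S / ρ := by
    rw [le_div_iff₀ hρ, mul_comm]
    exact H.rho_mul_sum_w_mul_sq_sInf_le hg hρe
  have hB : ∑ e ∈ H.E, H.w e * (M e - m e) ^ 2 ≤ D * S := by
    refine le_of_eq_of_le (sum_congr rfl fun e he => ?_) hgD
    have hne := H.edge_nonempty e he
    rw [H.edgeDisc_eq_sq g hne, sup'_eq_csSup_image, inf'_eq_csInf_image]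
  have hX : ∑ e ∈ H.E, H.w e * (m e * (M e - m e)) ≤ √(D / ρ) * S := by
    have hCS := sum_sq_le_sum_mul_sum_of_sq_le_mul H.E
      (r := fun e => H.w e * (m e * (M e - m e)))
      (fun e he => mul_nonneg (H.w_pos e he).le (sq_nonneg (m e)))
      (fun e he => mul_nonneg (H.w_pos e he).le (sq_nonneg (M e - m e)))
      (fun e _ => le_of_eq (by ring))
    have hS : 0 ≤ S := H.sqNorm_nonneg g
    refine (le_abs_self _).trans (abs_le_of_sq_le_sq (hCS.trans ?_) (by positivity))
    rw [mul_pow, Real.sq_sqrt (by positivity)]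
    calc _ ≤ S / ρ * (D * S) := mul_le_mul hA hB (sum_nonneg fun e he =>
            mul_nonneg (H.w_pos e he).le (sq_nonneg _)) (by positivity)
      _ = D / ρ * S ^ 2 := by ring
  calc ∑ e ∈ H.E, H.w e * (M e ^ 2 - m e ^ 2)
      = ∑ e ∈ H.E, H.w e * (M e - m e) ^ 2 + 2 * ∑ e ∈ H.E, H.w e * (m e * (M e - m e)) := by
        rw [mul_sum, ← sum_add_distrib]
        exact sum_congr rfl fun e _ => by ring
    _ ≤ (D + 2 * √(D / ρ)) * S := by linarith

section Levels

variable {t : ℕ → ℝ} {n : ℕ}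

theorem sum_mul_wS_superlevelSet {g : V → ℝ} (ht : StrictMonoOn t (Set.Iic n)) (ht0 : t 0 = 0)
    (hval : ∀ v, ∃ j ≤ n, t j = g v) :
    ∑ i ∈ range n, (t (i + 1) ^ 2 - t i ^ 2) * H.wS (superlevelSet g (t (i + 1))) =
      H.sqNorm g := by
  simp only [wS, superlevelSet, sum_filter, mul_sum]
  rw [sum_comm]
  refine sum_congr rfl fun v _ => ?_
  obtain ⟨j, hj, hjv⟩ := hval v
  rw [← hjv]
  have hsq := ht.sum_range_ite_sub (fun i => t i ^ 2) (Nat.zero_le j) hj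
  rw [ht0, zero_pow two_ne_zero, sub_zero] at hsq
  rw [← hsq, mul_sum]
  refine sum_congr rfl fun i hi => ?_
  have hpos : 0 < t (i + 1) := ht0 ▸ ht (Nat.zero_le n) (mem_range.1 hi) (Nat.succ_pos i)
  simp only [hpos, true_and]
  split_ifs <;> ring

theorem sum_mul_cut_superlevelSet {g : V → ℝ} (ht : StrictMonoOn t (Set.Iic n))
    (hval : ∀ v, ∃ j ≤ n, t j = g v) :
    ∑ i ∈ range n, (t (i + 1) ^ 2 - t i ^ 2) *
        ∑ e ∈ H.bdry (superlevelSet g (t (i + 1))), H.w e =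
      ∑ e ∈ H.E, H.w e * (sSup (g '' e) ^ 2 - sInf (g '' e) ^ 2) := by
  simp only [bdry, sum_filter, mul_sum]
  rw [sum_comm]
  refine sum_congr rfl fun e he => ?_
  have hne := H.edge_nonempty e he
  obtain ⟨u, hu, hmax⟩ := exists_mem_eq_sup' hne g
  obtain ⟨v, -, hmin⟩ := exists_mem_eq_inf' hne g
  obtain ⟨a, ha, hta⟩ := hval v
  obtain ⟨b, hb, htb⟩ := hval u
  have hab : a ≤ b := (ht.le_iff_le ha hb).1 <| by
    rw [hta, htb, ← hmin, ← hmax]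
    exact (inf'_le g hu).trans (le_sup' g hu)
  rw [← sup'_eq_csSup_image e hne, ← inf'_eq_csInf_image e hne, hmax, hmin, ← hta, ← htb,
    ← ht.sum_range_ite_sub (fun i => t i ^ 2) hab hb, mul_sum]
  refine sum_congr rfl fun i _ => ?_
  simp only [crosses_superlevelSet_iff hne, hmin, hmax, ← hta, ← htb]
  split_ifs <;> ring

theorem exists_superlevelSet_phi_le_of_strictMonoOn (hw : ∀ v, 0 < H.wv v) {g : V → ℝ}
    (ht : StrictMonoOn t (Set.Iic n)) (ht0 : t 0 = 0) (hn : 0 < n)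
    (htg : ∀ i ≤ n, t i ∈ univ.image g) (hval : ∀ v, ∃ j ≤ n, t j = g v) {C : ℝ}
    (hC : ∑ e ∈ H.E, H.w e * (sSup (g '' e) ^ 2 - sInf (g '' e) ^ 2) ≤ C * H.sqNorm g) :
    ∃ x, 0 < x ∧ (superlevelSet g x).Nonempty ∧ H.phi (superlevelSet g x) ≤ C := by
  have hpos : ∀ i ∈ range n, 0 < t (i + 1) := fun i hi =>
    ht0 ▸ ht (Nat.zero_le n) (mem_range.1 hi) (Nat.succ_pos i)
  have hδ : ∀ i ∈ range n, 0 < t (i + 1) ^ 2 - t i ^ 2 := fun i hi => by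
    have hin : i < n := mem_range.1 hi
    have hlt : t i < t (i + 1) := ht hin.le hin (Nat.lt_succ_self i)
    have hnn : 0 ≤ t i := ht0 ▸ ht.monotoneOn (Nat.zero_le n) hin.le (Nat.zero_le i)
    nlinarith
  -- The level-weighted cuts total at most `C` times the level-weighted volumes.
  obtain ⟨i, hi, hle⟩ := exists_le_of_sum_le (nonempty_range_iff.2 hn.ne') <|
    calc ∑ i ∈ range n, (t (i + 1) ^ 2 - t i ^ 2) *
          ∑ e ∈ H.bdry (superlevelSet g (t (i + 1))), H.w e
        ≤ C * H.sqNorm g := (H.sum_mul_cut_superlevelSet ht hval).trans_le hC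
      _ = ∑ i ∈ range n,
          (t (i + 1) ^ 2 - t i ^ 2) * (C * H.wS (superlevelSet g (t (i + 1)))) := by
        rw [← H.sum_mul_wS_superlevelSet ht ht0 hval, mul_sum]
        exact sum_congr rfl fun i _ => by ring
  obtain ⟨u, -, hu⟩ := mem_image.1 (htg (i + 1) (mem_range.1 hi))
  have hS : (superlevelSet g (t (i + 1))).Nonempty := ⟨u, mem_filter.2 ⟨mem_univ u, hu.ge⟩⟩
  refine ⟨t (i + 1), hpos i hi, hS, ?_⟩
  rw [phi, div_le_iff₀ (H.wS_pos hw hS)]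
  exact le_of_mul_le_mul_left hle (hδ i hi)

end Levels

theorem exists_superlevelSet_phi_le (hw : ∀ v, 0 < H.wv v) {g : V → ℝ} (hg : 0 ≤ g)
    (hg0 : ∃ v, g v = 0) (hne : g ≠ 0) {C : ℝ}
    (hC : ∑ e ∈ H.E, H.w e * (sSup (g '' e) ^ 2 - sInf (g '' e) ^ 2) ≤ C * H.sqNorm g) :
    ∃ x, 0 < x ∧ (superlevelSet g x).Nonempty ∧ H.phi (superlevelSet g x) ≤ C := by
  obtain ⟨v₀, hv₀⟩ := hg0
  obtain ⟨v₁, hv₁⟩ := Function.ne_iff.1 hne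
  set T := univ.image g
  have hT : T.card = T.card - 1 + 1 :=
    (Nat.succ_pred_eq_of_pos (card_pos.2 ⟨_, mem_image_of_mem g (mem_univ v₀)⟩)).symm
  obtain ⟨t, ht, htg, hTt⟩ := T.exists_strictMonoOn_enum hT
  have hval : ∀ v, ∃ j ≤ T.card - 1, t j = g v := fun v =>
    hTt _ (mem_image_of_mem g (mem_univ v))
  have ht0 : t 0 = 0 := by
    obtain ⟨j, hj, htj⟩ := hval v₀
    obtain ⟨u, -, hu⟩ := mem_image.1 (htg 0 (Nat.zero_le _))
    have := ht.monotoneOn (Nat.zero_le _) hj (Nat.zero_le j)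
    linarith [show (0 : ℝ) ≤ g u from hg u]
  have hn : 0 < T.card - 1 := by
    obtain ⟨j, hj, htj⟩ := hval v₁
    refine lt_of_lt_of_le (Nat.pos_of_ne_zero ?_) hj
    rintro rfl
    exact hv₁ (htj ▸ ht0)
  exact H.exists_superlevelSet_phi_le_of_strictMonoOn hw ht ht0 hn htg hval hC

theorem exists_sweep_cut (hw : ∀ v, 0 < H.wv v) {g : V → ℝ} (hg : 0 ≤ g)
    (hsupp : H.wS (univ.filter fun v => 0 < g v) ≤ H.wS univ / 2) (hpos : 0 < H.sqNorm g)
    {ρ D : ℝ} (hρ : 0 < ρ) (hρe : ∀ e ∈ H.E, ρ ≤ e.card) (hD : 0 ≤ D)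
    (hgD : H.energy g ≤ D * H.sqNorm g) :
    ∃ S : Finset V, S.Nonempty ∧ H.wS S ≤ H.wS univ / 2 ∧ H.phi S ≤ D + 2 * √(D / ρ) := by
  have hne : g ≠ 0 := by
    rintro rfl
    simp [sqNorm] at hpos
  have hg0 : ∃ v, g v = 0 := by
    by_contra! hall
    obtain ⟨v, -⟩ := Function.ne_iff.1 hne
    have hW : 0 < H.wS univ := H.wS_pos hw ⟨v, mem_univ v⟩
    rw [filter_true_of_mem fun v _ => show 0 < g v from (hg v).lt_of_ne' (hall v)] at hsupp
    linarith
  obtain ⟨x, hx, hS, hphi⟩ := H.exists_superlevelSet_phi_le hw hg hg0 hne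
    (H.sum_w_mul_sq_sSup_sub_sq_sInf_le hg hρ hρe hD hgD)
  refine ⟨_, hS, (H.wS_mono fun v hv => ?_).trans hsupp, hphi⟩
  exact mem_filter.2 ⟨mem_univ v, hx.trans_le (mem_filter.1 hv).2⟩

theorem exists_nonneg_part_disc_le (hw : ∀ v, 0 < H.wv v) {f : V → ℝ} (hf : f ≠ 0)
    (horth : H.wip f (fun _ => 1) = 0) :
    ∃ g : V → ℝ, 0 ≤ g ∧ H.wS (univ.filter fun v => 0 < g v) ≤ H.wS univ / 2 ∧
      0 < H.sqNorm g ∧ H.energy g ≤ H.disc f * H.sqNorm g := by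
  have : Nonempty V := let ⟨v, _⟩ := Function.ne_iff.1 hf; ⟨v⟩
  obtain ⟨c, hc_gt, hc_lt⟩ := exists_weighted_median H.wv_nonneg f
  set g := fun v => f v - c
  have hf₀ := H.sqNorm_pos hw hf
  have hfg : H.sqNorm f ≤ H.sqNorm g := H.sqNorm_sub_const horth c ▸
    le_add_of_nonneg_right (mul_nonneg (sq_nonneg c) (sum_nonneg fun v _ => H.wv_nonneg v))
  have hgD : H.energy g ≤ H.disc f * H.sqNorm g := by
    rw [H.energy_sub_const, H.energy_eq_disc_mul_sqNorm hf₀.ne']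
    exact mul_le_mul_of_nonneg_left hfg (H.disc_nonneg f)
  rcases exists_pos_and_le_mul_of_add_le (H.energy_nonneg g⁺) (H.energy_nonneg g⁻)
      (H.sqNorm_nonneg g⁺) (H.sqNorm_nonneg g⁻)
      (H.sqNorm_posPart_add_negPart g ▸ hf₀.trans_le hfg)
      (H.sqNorm_posPart_add_negPart g ▸ (H.energy_posPart_add_negPart_le g).trans hgD)
    with ⟨hpos, hle⟩ | ⟨hpos, hle⟩
  · refine ⟨g⁺, fun v => posPart_nonneg _, le_of_eq_of_le ?_ hc_gt, hpos, hle⟩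
    exact congrArg H.wS (filter_congr fun v _ => by simp [g, posPart_pos_iff])
  · refine ⟨g⁻, fun v => negPart_nonneg _, le_of_eq_of_le ?_ hc_lt, hpos, hle⟩
    exact congrArg H.wS (filter_congr fun v _ => by simp [g, negPart_pos_iff])

end EWHypergraph

/-- Sweep-cut rounding: for a nonzero `f ⊥_w 1` there is a nonempty `S` with
`w(S) ≤ w(V)/2` and `φ(S) ≤ D_w(f) + 2√(D_w(f)/r_min)`. -/
theorem hypergraph_sweep_rounding {V : Type*} [Fintype V] [DecidableEq V]
    (H : EWHypergraph V) (hw : ∀ v : V, 0 < H.wv v) (hE : H.E.Nonempty)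
    (f : V → ℝ) (hf : f ≠ 0) (horth : H.wip f (fun _ => 1) = 0) :
    ∃ S : Finset V, S.Nonempty ∧ H.wS S ≤ H.wS Finset.univ / 2 ∧
      H.phi S ≤ H.disc f +
        2 * Real.sqrt (H.disc f /
          (((H.E.image Finset.card).min' (hE.image Finset.card) : ℕ) : ℝ)) := by
  set r := (H.E.image Finset.card).min' (hE.image Finset.card)
  have hr : ∀ e ∈ H.E, (r : ℝ) ≤ e.card := fun e he => by
    exact_mod_cast min'_le _ _ (mem_image_of_mem _ he)
  have hr0 : (0 : ℝ) < r := by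
    obtain ⟨e, he, hre⟩ := mem_image.1 (min'_mem (H.E.image Finset.card) (hE.image Finset.card))
    exact_mod_cast hre ▸ card_pos.2 (H.edge_nonempty e he)
  obtain ⟨g, hg, hsupp, hpos, hgD⟩ := H.exists_nonneg_part_disc_le hw hf horth
  exact H.exists_sweep_cut hw hg hsupp hpos hr0 hr (H.disc_nonneg f) hgD
end

section
/- Let H = (V,E,w) be an edge-weighted hypergraph, let f_1, …, f_k ∈ ℝ^V be orthonormal in the weighted space, and let u_i ∈ ℝ^k (i ∈ V) be the spectral embedding. With ξ := max_{s ∈ [k]} D_w(f_s), the following hold: (1) Σ_{e ∈ E} w_e · max_{i,j ∈ e} ‖u_i − u_j‖² ≤ ξ · Σ_{i ∈ V} w_i ‖u_i‖²; (2) Σ_{i ∈ V} w_i ‖u_i‖² = k; (3) for every j ∈ V, Σ_{i ∈ V} w_i · ⟨u_j, u_i⟩² = ‖u_j‖²; (4) Σ_{e ∈ E} w_e · (max_{i ∈ e} ‖u_i‖) · (max_{i,j ∈ e} ‖u_i − u_j‖) ≤ k · √ξ. -/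
open Finset

/-- An edge-weighted hypergraph on a finite vertex set `V`: a finite set of hyperedges,
each a nonempty subset of `V`, with positive weights. -/
structure WeightedHypergraph (V : Type*) [Fintype V] [DecidableEq V] where
  E : Finset (Finset V)
  w : Finset V → ℝ
  edge_nonempty : ∀ e ∈ E, e.Nonempty
  w_pos : ∀ e ∈ E, 0 < w e

namespace WeightedHypergraph

variable {V : Type*} [Fintype V] [DecidableEq V]

/-- The weight of a vertex: total weight of hyperedges containing it. -/
noncomputable def wv (H : WeightedHypergraph V) (v : V) : ℝ :=
  ∑ e ∈ H.E.filter (fun e => v ∈ e), H.w e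

/-- The weight of a set of vertices. -/
noncomputable def wS (H : WeightedHypergraph V) (S : Finset V) : ℝ := ∑ v ∈ S, H.wv v

/-- The boundary of `S`: hyperedges meeting both `S` and its complement. -/
noncomputable def bdry (H : WeightedHypergraph V) (S : Finset V) : Finset (Finset V) :=
  H.E.filter (fun e => (e ∩ S).Nonempty ∧ (e \ S).Nonempty)

/-- The expansion `φ(S)` of a set of vertices. -/
noncomputable def phi (H : WeightedHypergraph V) (S : Finset V) : ℝ :=
  (∑ e ∈ H.bdry S, H.w e) / H.wS S

/-- `max_{u,v ∈ e} (f u - f v)^2`. -/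
noncomputable def edgeDisc (H : WeightedHypergraph V) (f : V → ℝ) (e : Finset V) : ℝ :=
  sSup {x : ℝ | ∃ u ∈ e, ∃ v ∈ e, (f u - f v) ^ 2 = x}

/-- The discrepancy ratio `D_w(f)`. -/
noncomputable def disc (H : WeightedHypergraph V) (f : V → ℝ) : ℝ :=
  (∑ e ∈ H.E, H.w e * H.edgeDisc f e) / ∑ u : V, H.wv u * f u ^ 2

/-- The weighted inner product `⟨f,g⟩_w`. -/
noncomputable def wip (H : WeightedHypergraph V) (f g : V → ℝ) : ℝ :=
  ∑ u : V, H.wv u * f u * g u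

/-- `γ₂`: infimum of the discrepancy ratio over nonzero `f ⊥_w 1`. -/
noncomputable def gamma2 (H : WeightedHypergraph V) : ℝ :=
  sInf {x : ℝ | ∃ f : V → ℝ, f ≠ 0 ∧ H.wip f (fun _ => 1) = 0 ∧ H.disc f = x}

/-- The hypergraph expansion `φ_H`. -/
noncomputable def phiH (H : WeightedHypergraph V) : ℝ :=
  sInf {x : ℝ | ∃ S : Finset V, S.Nonempty ∧ S ≠ univ ∧
    x = max (H.phi S) (H.phi Sᶜ)}

/-- `ζ_k`: inf over `k`-tuples of nonzero pairwise `w`-orthogonal vectors of the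
sup of the discrepancy ratio over nonzero vectors in their span. -/
noncomputable def zeta (H : WeightedHypergraph V) (k : ℕ) : ℝ :=
  sInf {x : ℝ | ∃ f : Fin k → V → ℝ, (∀ i, f i ≠ 0) ∧
    (∀ i j, i ≠ j → H.wip (f i) (f j) = 0) ∧
    x = sSup {y : ℝ | ∃ h : V → ℝ, h ≠ 0 ∧
      h ∈ Submodule.span ℝ (Set.range f) ∧ H.disc h = y}}

/-- `ξ_k`: inf over `k`-tuples of nonzero pairwise `w`-orthogonal vectors of the
maximum discrepancy ratio among them. -/
noncomputable def xi (H : WeightedHypergraph V) (k : ℕ) : ℝ :=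
  sInf {x : ℝ | ∃ f : Fin k → V → ℝ, (∀ i, f i ≠ 0) ∧
    (∀ i j, i ≠ j → H.wip (f i) (f j) = 0) ∧
    x = sSup {y : ℝ | ∃ i, H.disc (f i) = y}}

/-- A sequence of procedural minimizers: `f 0` is a nonzero constant vector, each `f i`
is nonzero and `w`-orthogonal to the previous ones, and attains the infimum of the
discrepancy ratio over nonzero vectors `w`-orthogonal to the previous ones. -/
def IsProcMin (H : WeightedHypergraph V) {k : ℕ} (f : Fin k → V → ℝ) : Prop :=
  (∀ i, f i ≠ 0) ∧
  (∀ i : Fin k, (i : ℕ) = 0 → ∃ c : ℝ, f i = fun _ => c) ∧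
  (∀ i j : Fin k, (j : ℕ) < (i : ℕ) → H.wip (f i) (f j) = 0) ∧
  (∀ i : Fin k, 0 < (i : ℕ) → H.disc (f i) =
    sInf {x : ℝ | ∃ g : V → ℝ, g ≠ 0 ∧
      (∀ j : Fin k, (j : ℕ) < (i : ℕ) → H.wip g (f j) = 0) ∧ H.disc g = x})

end WeightedHypergraph

/-!
Everything is computed coordinatewise in the embedding. Orthonormality gives (2) and (3) by
expanding the squares. For (1), the maximum over an edge of `‖u_i - u_j‖² = Σ_s (f_s i - f_s j)²`
is at most the sum over `s` of the edge maxima for the single vectors `f_s`; summing over edges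
gives `Σ_s D_w(f_s) ≤ k ξ` because each `f_s` has unit weighted norm. For (4), the two maxima are
square roots of `max_{i ∈ e} ‖u_i‖² ≤ Σ_{i ∈ e} ‖u_i‖²` and of the maximum in (1), so the weighted
Cauchy–Schwarz inequality over edges bounds the sum by `√k · √(k ξ)`, using double counting
`Σ_e w_e Σ_{i ∈ e} = Σ_i w_i` and (2).
-/

section FiniteSup

variable {α β : Type*} {s : Finset α}

theorem setOf_exists_mem_exists_mem_eq (s : Finset α) (F : α → α → β) :
    {y | ∃ i ∈ s, ∃ j ∈ s, F i j = y} = {y | ∃ p ∈ s ×ˢ s, F p.1 p.2 = y} := by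
  ext; simp [and_assoc]

theorem sSup_setOf_exists_mem_eq_sup' [ConditionallyCompleteLinearOrder β] (hs : s.Nonempty)
    (F : α → β) : sSup {y | ∃ i ∈ s, F i = y} = s.sup' hs F := by
  rw [sup'_eq_csSup_image]
  congr 1

theorem sSup_setOf_exists_mem_sqrt_eq (hs : s.Nonempty) (F : α → ℝ) :
    sSup {y | ∃ i ∈ s, √(F i) = y} = √(sSup {y | ∃ i ∈ s, F i = y}) := by
  rw [sSup_setOf_exists_mem_eq_sup' hs, sSup_setOf_exists_mem_eq_sup' hs,
    apply_sup'_eq_sup'_comp hs _ fun _ _ => Real.sqrt_monotone.map_max]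
  rfl

theorem sSup_setOf_exists_mem_exists_mem_sqrt_eq (hs : s.Nonempty) (F : α → α → ℝ) :
    sSup {y | ∃ i ∈ s, ∃ j ∈ s, √(F i j) = y} = √(sSup {y | ∃ i ∈ s, ∃ j ∈ s, F i j = y}) := by
  simp only [setOf_exists_mem_exists_mem_eq]
  exact sSup_setOf_exists_mem_sqrt_eq (hs.product hs) _

theorem Real.sSup_setOf_exists_mem_le_sum {F : α → ℝ} (hF : ∀ i ∈ s, 0 ≤ F i) :
    sSup {y | ∃ i ∈ s, F i = y} ≤ ∑ i ∈ s, F i :=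
  Real.sSup_le (by rintro _ ⟨i, hi, rfl⟩; exact single_le_sum hF hi) (sum_nonneg hF)

end FiniteSup

theorem Real.sum_mul_sqrt_mul_sqrt_le {ι : Type*} (s : Finset ι) {w a b : ι → ℝ}
    (hw : ∀ i ∈ s, 0 ≤ w i) (ha : ∀ i ∈ s, 0 ≤ a i) (hb : ∀ i ∈ s, 0 ≤ b i) :
    ∑ i ∈ s, w i * (√(a i) * √(b i)) ≤ √(∑ i ∈ s, w i * a i) * √(∑ i ∈ s, w i * b i) := by
  have hsq : ∀ c : ι → ℝ, (∀ i ∈ s, 0 ≤ c i) →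
      ∑ i ∈ s, (√(w i) * √(c i)) ^ 2 = ∑ i ∈ s, w i * c i := fun c hc =>
    sum_congr rfl fun i hi => by rw [mul_pow, Real.sq_sqrt (hw i hi), Real.sq_sqrt (hc i hi)]
  calc ∑ i ∈ s, w i * (√(a i) * √(b i))
      = ∑ i ∈ s, (√(w i) * √(a i)) * (√(w i) * √(b i)) :=
        sum_congr rfl fun i hi => by
          rw [mul_mul_mul_comm, Real.mul_self_sqrt (hw i hi)]
    _ ≤ _ := Real.sum_mul_le_sqrt_mul_sqrt _ _ _
    _ = _ := by rw [hsq a ha, hsq b hb]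

namespace WeightedHypergraph

variable {V : Type*} [Fintype V] [DecidableEq V] (H : WeightedHypergraph V)

theorem sum_w_mul_sum_eq_sum_wv_mul (g : V → ℝ) :
    ∑ e ∈ H.E, H.w e * ∑ i ∈ e, g i = ∑ i, H.wv i * g i := by
  simp_rw [wv, sum_filter, sum_mul, mul_sum]
  rw [sum_comm]
  refine sum_congr rfl fun e _ => ?_
  simp [ite_mul, sum_ite_mem]

theorem wip_self (g : V → ℝ) : H.wip g g = ∑ u, H.wv u * g u ^ 2 := by
  simp only [wip, mul_assoc, sq]

theorem disc_eq_of_wip_self_eq_one {g : V → ℝ} (hg : H.wip g g = 1) :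
    H.disc g = ∑ e ∈ H.E, H.w e * H.edgeDisc g e := by
  rw [disc, ← wip_self, hg, div_one]

theorem le_edgeDisc (g : V → ℝ) {e : Finset V} {u v : V} (hu : u ∈ e) (hv : v ∈ e) :
    (g u - g v) ^ 2 ≤ H.edgeDisc g e := by
  have huv : (u, v) ∈ e ×ˢ e := mem_product.2 ⟨hu, hv⟩
  rw [edgeDisc, setOf_exists_mem_exists_mem_eq, sSup_setOf_exists_mem_eq_sup' ⟨_, huv⟩]
  exact le_sup' (fun p : V × V => (g p.1 - g p.2) ^ 2) huv

theorem edgeDisc_nonneg (g : V → ℝ) (e : Finset V) : 0 ≤ H.edgeDisc g e :=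
  Real.sSup_nonneg (by rintro _ ⟨u, -, v, -, rfl⟩; exact sq_nonneg _)

variable {ι : Type*} [Fintype ι] {f : ι → V → ℝ}

theorem sum_wv_mul_sum_sq_eq_card (hnorm : ∀ s, H.wip (f s) (f s) = 1) :
    ∑ i, H.wv i * ∑ s, f s i ^ 2 = Fintype.card ι := by
  simp_rw [mul_sum]
  rw [sum_comm]
  simp [← wip_self, hnorm]

theorem sum_wv_mul_sum_mul_sq [DecidableEq ι]
    (horth : ∀ s t, H.wip (f s) (f t) = if s = t then 1 else 0) (j : V) :
    ∑ i, H.wv i * (∑ s, f s j * f s i) ^ 2 = ∑ s, f s j ^ 2 := by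
  calc ∑ i, H.wv i * (∑ s, f s j * f s i) ^ 2
      = ∑ s, ∑ t, f s j * f t j * H.wip (f s) (f t) := by
        simp_rw [sq, sum_mul_sum, wip, mul_sum]
        rw [sum_comm]
        refine sum_congr rfl fun s _ => ?_
        rw [sum_comm]
        refine sum_congr rfl fun t _ => sum_congr rfl fun i _ => by ring
    _ = ∑ s, f s j ^ 2 := by simp [horth, sq]

theorem sSup_sum_sq_sub_le_sum_edgeDisc (f : ι → V → ℝ) (e : Finset V) :
    sSup {y | ∃ i ∈ e, ∃ j ∈ e, ∑ s, (f s i - f s j) ^ 2 = y} ≤ ∑ s, H.edgeDisc (f s) e :=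
  Real.sSup_le
    (by rintro _ ⟨i, hi, j, hj, rfl⟩; exact sum_le_sum fun s _ => H.le_edgeDisc _ hi hj)
    (sum_nonneg fun s _ => H.edgeDisc_nonneg _ _)

theorem sum_w_mul_sSup_sum_sq_sub_le (hnorm : ∀ s, H.wip (f s) (f s) = 1) {ξ : ℝ}
    (hξ : ∀ s, H.disc (f s) ≤ ξ) :
    ∑ e ∈ H.E, H.w e * sSup {y | ∃ i ∈ e, ∃ j ∈ e, ∑ s, (f s i - f s j) ^ 2 = y} ≤
      ξ * Fintype.card ι :=
  calc ∑ e ∈ H.E, H.w e * sSup {y | ∃ i ∈ e, ∃ j ∈ e, ∑ s, (f s i - f s j) ^ 2 = y}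
      ≤ ∑ e ∈ H.E, H.w e * ∑ s, H.edgeDisc (f s) e :=
        sum_le_sum fun e he =>
          mul_le_mul_of_nonneg_left (H.sSup_sum_sq_sub_le_sum_edgeDisc f e) (H.w_pos e he).le
    _ = ∑ s, H.disc (f s) := by
        simp_rw [mul_sum]
        rw [sum_comm]
        exact sum_congr rfl fun s _ => (H.disc_eq_of_wip_self_eq_one (hnorm s)).symm
    _ ≤ ∑ _s : ι, ξ := sum_le_sum fun s _ => hξ s
    _ = ξ * Fintype.card ι := by simp [mul_comm]

theorem sum_w_mul_sSup_norm_mul_sSup_dist_le (hnorm : ∀ s, H.wip (f s) (f s) = 1) {ξ : ℝ}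
    (hξ : ∀ s, H.disc (f s) ≤ ξ) :
    ∑ e ∈ H.E, H.w e * (sSup {y | ∃ i ∈ e, √(∑ s, f s i ^ 2) = y} *
        sSup {y | ∃ i ∈ e, ∃ j ∈ e, √(∑ s, (f s i - f s j) ^ 2) = y}) ≤
      Fintype.card ι * √ξ := by
  set a : Finset V → ℝ := fun e => sSup {y | ∃ i ∈ e, ∑ s, f s i ^ 2 = y}
  set b : Finset V → ℝ := fun e => sSup {y | ∃ i ∈ e, ∃ j ∈ e, ∑ s, (f s i - f s j) ^ 2 = y}
  have hw : ∀ e ∈ H.E, 0 ≤ H.w e := fun e he => (H.w_pos e he).le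
  have ha : ∀ e ∈ H.E, 0 ≤ a e := fun e _ =>
    Real.sSup_nonneg (by rintro _ ⟨i, -, rfl⟩; positivity)
  have hb : ∀ e ∈ H.E, 0 ≤ b e := fun e _ =>
    Real.sSup_nonneg (by rintro _ ⟨i, -, j, -, rfl⟩; positivity)
  have hsum_a : ∑ e ∈ H.E, H.w e * a e ≤ Fintype.card ι :=
    calc ∑ e ∈ H.E, H.w e * a e
        ≤ ∑ e ∈ H.E, H.w e * ∑ i ∈ e, ∑ s, f s i ^ 2 :=
          sum_le_sum fun e he => mul_le_mul_of_nonneg_left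
            (Real.sSup_setOf_exists_mem_le_sum fun i _ => by positivity) (hw e he)
      _ = Fintype.card ι := by
          rw [sum_w_mul_sum_eq_sum_wv_mul, H.sum_wv_mul_sum_sq_eq_card hnorm]
  have hsum_b : ∑ e ∈ H.E, H.w e * b e ≤ ξ * Fintype.card ι :=
    H.sum_w_mul_sSup_sum_sq_sub_le hnorm hξ
  calc _ = ∑ e ∈ H.E, H.w e * (√(a e) * √(b e)) := by
        refine sum_congr rfl fun e he => ?_
        have hne := H.edge_nonempty e he
        rw [sSup_setOf_exists_mem_sqrt_eq hne, sSup_setOf_exists_mem_exists_mem_sqrt_eq hne]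
    _ ≤ √(∑ e ∈ H.E, H.w e * a e) * √(∑ e ∈ H.E, H.w e * b e) :=
        Real.sum_mul_sqrt_mul_sqrt_le _ hw ha hb
    _ ≤ √(Fintype.card ι) * √(ξ * Fintype.card ι) :=
        mul_le_mul (Real.sqrt_le_sqrt hsum_a) (Real.sqrt_le_sqrt hsum_b) (Real.sqrt_nonneg _)
          (Real.sqrt_nonneg _)
    _ = Fintype.card ι * √ξ := by
        rw [Real.sqrt_mul' _ (Nat.cast_nonneg _), mul_left_comm,
          Real.mul_self_sqrt (Nat.cast_nonneg _), mul_comm]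

end WeightedHypergraph

theorem spectral_embedding_properties_general {V : Type*} [Fintype V] [DecidableEq V]
    (H : WeightedHypergraph V)
    (k : ℕ) (hk : 0 < k) (f : Fin k → V → ℝ)
    (horth : ∀ i j, H.wip (f i) (f j) = if i = j then 1 else 0)
    (ξ : ℝ)
    (hξ : ξ = Finset.univ.sup' (Finset.univ_nonempty_iff.mpr ⟨⟨0, hk⟩⟩)
      (fun s => H.disc (f s))) :
    (∑ e ∈ H.E, H.w e *
        sSup {y : ℝ | ∃ i ∈ e, ∃ j ∈ e, (∑ s : Fin k, (f s i - f s j) ^ 2) = y} ≤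
      ξ * ∑ i : V, H.wv i * ∑ s : Fin k, f s i ^ 2) ∧
    (∑ i : V, H.wv i * ∑ s : Fin k, f s i ^ 2 = k) ∧
    (∀ j : V, ∑ i : V, H.wv i * (∑ s : Fin k, f s j * f s i) ^ 2 =
      ∑ s : Fin k, f s j ^ 2) ∧
    (∑ e ∈ H.E, H.w e *
        (sSup {y : ℝ | ∃ i ∈ e, Real.sqrt (∑ s : Fin k, f s i ^ 2) = y} *
          sSup {y : ℝ | ∃ i ∈ e, ∃ j ∈ e,
            Real.sqrt (∑ s : Fin k, (f s i - f s j) ^ 2) = y}) ≤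
      k * Real.sqrt ξ) := by
  have hnorm : ∀ s, H.wip (f s) (f s) = 1 := fun s => by simp [horth]
  have hdisc : ∀ s, H.disc (f s) ≤ ξ := fun s =>
    hξ ▸ le_sup' (fun s => H.disc (f s)) (mem_univ s)
  have hcard := H.sum_wv_mul_sum_sq_eq_card hnorm
  rw [Fintype.card_fin] at hcard
  refine ⟨?_, hcard, H.sum_wv_mul_sum_mul_sq horth, ?_⟩
  · simpa [hcard] using H.sum_w_mul_sSup_sum_sq_sub_le hnorm hdisc
  · simpa using H.sum_w_mul_sSup_norm_mul_sSup_dist_le hnorm hdisc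

/-- Properties of the spectral embedding `u_i(s) := f_s(i)` of a weighted-orthonormal
system `f_1, …, f_k`, with `ξ := max_s D_w(f_s)`:
(1) `Σ_e w_e max_{i,j∈e} ‖u_i − u_j‖² ≤ ξ Σ_i w_i ‖u_i‖²`;
(2) `Σ_i w_i ‖u_i‖² = k`;
(3) `Σ_i w_i ⟨u_j, u_i⟩² = ‖u_j‖²` for all `j`;
(4) `Σ_e w_e (max_{i∈e} ‖u_i‖)(max_{i,j∈e} ‖u_i − u_j‖) ≤ k √ξ`. -/
theorem spectral_embedding_properties {V : Type*} [Fintype V] [DecidableEq V]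
    (H : WeightedHypergraph V) (hw : ∀ v : V, 0 < H.wv v)
    (k : ℕ) (hk : 0 < k) (f : Fin k → V → ℝ)
    (horth : ∀ i j, H.wip (f i) (f j) = if i = j then 1 else 0)
    (ξ : ℝ)
    (hξ : ξ = Finset.univ.sup' (Finset.univ_nonempty_iff.mpr ⟨⟨0, hk⟩⟩)
      (fun s => H.disc (f s))) :
    (∑ e ∈ H.E, H.w e *
        sSup {y : ℝ | ∃ i ∈ e, ∃ j ∈ e, (∑ s : Fin k, (f s i - f s j) ^ 2) = y} ≤
      ξ * ∑ i : V, H.wv i * ∑ s : Fin k, f s i ^ 2) ∧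
    (∑ i : V, H.wv i * ∑ s : Fin k, f s i ^ 2 = k) ∧
    (∀ j : V, ∑ i : V, H.wv i * (∑ s : Fin k, f s j * f s i) ^ 2 =
      ∑ s : Fin k, f s j ^ 2) ∧
    (∑ e ∈ H.E, H.w e *
        (sSup {y : ℝ | ∃ i ∈ e, Real.sqrt (∑ s : Fin k, f s i ^ 2) = y} *
          sSup {y : ℝ | ∃ i ∈ e, ∃ j ∈ e,
            Real.sqrt (∑ s : Fin k, (f s i - f s j) ^ 2) = y}) ≤
      k * Real.sqrt ξ) :=
  spectral_embedding_properties_general H k hk f horth ξ hξ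
end
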